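/- arXiv:1409.0379 — 5 statements merged into one kernel-verified Lean document; each statement's English description precedes it below -/
import Mathlib

section
/- Let 1 < a < ∞ and 0 < b < ∞. There is a constant C = C(a,b) > 0 such that for every sequence (c_k)_{k∈ℤ} of nonnegative real numbers, ∑_{k∈ℤ} ( ∑_{j∈ℤ} a^{-|j-k|} c_j )^b ≤ C ∑_{j∈ℤ} c_j^b. -/
/-! With `r = a⁻¹`, the inner sum is the convolution of `c` with the kernel `K m = r ^ |m|`,
whose total mass `(1 + r) / (1 - r)` is finite. For `b ≤ 1`, subadditivity of `x ↦ x ^ b`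
reduces the claim to convolution with the summable kernel `K ^ b`; for `b ≥ 1`, Jensen's
inequality with the kernel as weights gives
`(∑ⱼ K (j - k) cⱼ) ^ b ≤ ‖K‖₁ ^ (b - 1) ∑ⱼ K (j - k) cⱼ ^ b`. In both cases, summing over `k`
and exchanging the order of summation gives the bound. -/

open scoped ENNReal

namespace ENNReal

variable {ι : Type*}

theorem rpow_sum_le_sum_rpow (s : Finset ι) (f : ι → ℝ≥0∞) {p : ℝ} (hp0 : 0 < p) (hp1 : p ≤ 1) :
    (∑ i ∈ s, f i) ^ p ≤ ∑ i ∈ s, f i ^ p := by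
  classical
  induction s using Finset.induction_on with
  | empty => simp [zero_rpow_of_pos hp0]
  | insert i s hi ih =>
    rw [Finset.sum_insert hi, Finset.sum_insert hi]
    exact (rpow_add_le_add_rpow _ _ hp0.le hp1).trans (by gcongr)

theorem rpow_tsum_le_tsum_rpow (f : ι → ℝ≥0∞) {p : ℝ} (hp0 : 0 < p) (hp1 : p ≤ 1) :
    (∑' i, f i) ^ p ≤ ∑' i, f i ^ p := by
  rw [← le_rpow_inv_iff hp0]
  refine tsum_le_of_sum_le' zero_le fun s => (le_rpow_inv_iff hp0).2 ?_
  exact (rpow_sum_le_sum_rpow s f hp0 hp1).trans (ENNReal.sum_le_tsum s)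

theorem inner_le_weight_mul_Lp_tsum {p : ℝ} (hp : 1 ≤ p) (w f : ι → ℝ≥0∞) :
    ∑' i, w i * f i ≤ (∑' i, w i) ^ (1 - p⁻¹) * (∑' i, w i * f i ^ p) ^ p⁻¹ := by
  have hp' : 0 ≤ 1 - p⁻¹ := sub_nonneg.2 (inv_le_one_of_one_le₀ hp)
  refine tsum_le_of_sum_le' zero_le fun s => ?_
  refine (inner_le_weight_mul_Lp_of_nonneg s hp w f).trans ?_
  gcongr <;> exact ENNReal.sum_le_tsum s

/-- Jensen's inequality for the convex function `x ↦ x ^ p` and the (unnormalised) weights `w`. -/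
theorem rpow_tsum_mul_le {p : ℝ} (hp : 1 ≤ p) (w f : ι → ℝ≥0∞) :
    (∑' i, w i * f i) ^ p ≤ (∑' i, w i) ^ (p - 1) * ∑' i, w i * f i ^ p := by
  have hp0 : 0 < p := zero_lt_one.trans_le hp
  calc (∑' i, w i * f i) ^ p
      ≤ ((∑' i, w i) ^ (1 - p⁻¹) * (∑' i, w i * f i ^ p) ^ p⁻¹) ^ p := by
        gcongr; exact inner_le_weight_mul_Lp_tsum hp w f
    _ = (∑' i, w i) ^ (p - 1) * ∑' i, w i * f i ^ p := by
        rw [mul_rpow_of_nonneg _ _ hp0.le, ← rpow_mul, ← rpow_mul, inv_mul_cancel₀ hp0.ne',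
          rpow_one, sub_mul, one_mul, inv_mul_cancel₀ hp0.ne']

theorem tsum_pow_natAbs (r : ℝ≥0∞) : ∑' m : ℤ, r ^ m.natAbs = (1 + r) * (1 - r)⁻¹ := by
  rw [tsum_of_nat_of_neg_add_one ENNReal.summable ENNReal.summable]
  norm_cast
  simp only [Int.natAbs_negSucc, pow_succ', ENNReal.tsum_mul_left, tsum_geometric]
  ring

theorem tsum_pow_natAbs_ne_top {r : ℝ≥0∞} (hr : r < 1) : ∑' m : ℤ, r ^ m.natAbs ≠ ∞ := by
  rw [tsum_pow_natAbs]
  exact mul_ne_top (add_ne_top.2 ⟨one_ne_top, hr.ne_top⟩) (inv_ne_top.2 (tsub_pos_of_lt hr).ne')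

theorem tsum_pow_natAbs_ne_zero (r : ℝ≥0∞) : ∑' m : ℤ, r ^ m.natAbs ≠ 0 :=
  ENNReal.tsum_eq_zero.not.2 fun h => by simpa using h 0

section Convolution

variable {G : Type*} [AddCommGroup G]

theorem tsum_tsum_comp_sub_mul (K x : G → ℝ≥0∞) :
    ∑' k, ∑' j, K (j - k) * x j = (∑' m, K m) * ∑' j, x j := by
  rw [ENNReal.tsum_comm, ← ENNReal.tsum_mul_left]
  refine tsum_congr fun j => ?_
  rw [ENNReal.tsum_mul_right, ← (Equiv.subLeft j).tsum_eq K]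
  rfl

theorem tsum_rpow_conv_le_of_le_one (K x : G → ℝ≥0∞) {p : ℝ} (hp0 : 0 < p) (hp1 : p ≤ 1) :
    ∑' k, (∑' j, K (j - k) * x j) ^ p ≤ (∑' m, K m ^ p) * ∑' j, x j ^ p := by
  calc ∑' k, (∑' j, K (j - k) * x j) ^ p
      ≤ ∑' k, ∑' j, K (j - k) ^ p * x j ^ p := by
        gcongr with k
        simp_rw [← mul_rpow_of_nonneg _ _ hp0.le]
        exact rpow_tsum_le_tsum_rpow _ hp0 hp1
    _ = (∑' m, K m ^ p) * ∑' j, x j ^ p := tsum_tsum_comp_sub_mul (K · ^ p) (x · ^ p)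

theorem tsum_rpow_conv_le_of_one_le (K x : G → ℝ≥0∞) {p : ℝ} (hp : 1 ≤ p) :
    ∑' k, (∑' j, K (j - k) * x j) ^ p ≤ (∑' m, K m) ^ p * ∑' j, x j ^ p := by
  have hK (k : G) : ∑' j, K (j - k) = ∑' m, K m := (Equiv.subRight k).tsum_eq K
  calc ∑' k, (∑' j, K (j - k) * x j) ^ p
      ≤ ∑' k, (∑' m, K m) ^ (p - 1) * ∑' j, K (j - k) * x j ^ p := by
        gcongr with k
        rw [← hK k]
        exact rpow_tsum_mul_le hp _ _
    _ = (∑' m, K m) ^ p * ∑' j, x j ^ p := by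
        rw [ENNReal.tsum_mul_left, tsum_tsum_comp_sub_mul, ← mul_assoc]
        congr 1
        conv_rhs => rw [← sub_add_cancel p 1,
          rpow_add_of_nonneg _ _ (sub_nonneg.2 hp) zero_le_one, rpow_one]

end Convolution

theorem exists_tsum_rpow_conv_pow_natAbs_le {r : ℝ≥0∞} (hr : r < 1) {p : ℝ} (hp : 0 < p) :
    ∃ D : ℝ≥0∞, D ≠ 0 ∧ D ≠ ∞ ∧ ∀ x : ℤ → ℝ≥0∞,
      ∑' k, (∑' j, r ^ (j - k).natAbs * x j) ^ p ≤ D * ∑' j, x j ^ p := by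
  rcases le_or_gt p 1 with hp1 | hp1
  · have hpow (n : ℕ) : (r ^ n) ^ p = (r ^ p) ^ n := by
      rw [← rpow_natCast_mul, mul_comm, rpow_mul_natCast]
    refine ⟨∑' m : ℤ, (r ^ p) ^ m.natAbs, tsum_pow_natAbs_ne_zero _,
      tsum_pow_natAbs_ne_top (rpow_lt_one hr hp), fun x => ?_⟩
    simpa only [hpow] using tsum_rpow_conv_le_of_le_one (fun m : ℤ => r ^ m.natAbs) x hp hp1
  · have hS := tsum_pow_natAbs_ne_top hr
    refine ⟨(∑' m : ℤ, r ^ m.natAbs) ^ p, ?_, rpow_ne_top_of_nonneg hp.le hS, fun x =>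
      tsum_rpow_conv_le_of_one_le (fun m : ℤ => r ^ m.natAbs) x hp1.le⟩
    exact (rpow_pos (pos_iff_ne_zero.2 (tsum_pow_natAbs_ne_zero r)) hS).ne'

end ENNReal

/-- For `1 < a < ∞` and `0 < b < ∞` there is `C = C(a,b) > 0` such that
for every sequence `(c_k)_{k∈ℤ}` of nonnegative reals,
`∑_{k∈ℤ} (∑_{j∈ℤ} a^{-|j-k|} c_j)^b ≤ C ∑_{j∈ℤ} c_j^b`,
the sums being taken in the extended nonnegative reals. -/
theorem summing_lemma (a b : ℝ) (ha : 1 < a) (hb : 0 < b) :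
    ∃ C : ℝ, 0 < C ∧ ∀ c : ℤ → ℝ, (∀ j, 0 ≤ c j) →
      ∑' k : ℤ, (∑' j : ℤ, ENNReal.ofReal (a ^ (-|j - k|) * c j)) ^ b
        ≤ ENNReal.ofReal C * ∑' j : ℤ, ENNReal.ofReal (c j) ^ b := by
  set r := ENNReal.ofReal a⁻¹
  have hkernel (m : ℤ) (t : ℝ) :
      ENNReal.ofReal (a ^ (-|m|) * t) = r ^ m.natAbs * ENNReal.ofReal t := by
    have ha0 : 0 < a := zero_lt_one.trans ha
    rw [ENNReal.ofReal_mul (by positivity), ← ENNReal.ofReal_pow (by positivity), zpow_neg,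
      Int.abs_eq_natAbs, zpow_natCast, inv_pow]
  obtain ⟨D, hD0, hDtop, hD⟩ := ENNReal.exists_tsum_rpow_conv_pow_natAbs_le
    (ENNReal.ofReal_lt_one.2 (inv_lt_one_of_one_lt₀ ha)) hb
  refine ⟨D.toReal, ENNReal.toReal_pos hD0 hDtop, fun c _ => ?_⟩
  simpa only [hkernel, ENNReal.ofReal_toReal hDtop] using hD fun j => ENNReal.ofReal (c j)
end

section
/- Let (X,d,μ) be a metric measure space, 0 < s < 1, and let S ⊂ X be a measurable set. Let u : X → ℝ be a measurable function with (g_k)_{k∈ℤ} ∈ 𝔻^s(u), and let φ be a bounded L-Lipschitz function on X supported in S. Then the sequences (ρ_k)_{k∈ℤ} and (h_k)_{k∈ℤ}, where ρ_k = ( g_k ‖φ‖_∞ + 2^{k(s-1)} L |u| ) χ_{supp φ} and h_k = ( g_k + 2^{sk+2} |u| ) ‖φ‖_∞ χ_{supp φ}, are fractional s-gradients of the product uφ. -/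
open MeasureTheory Metric Set
open scoped ENNReal NNReal
noncomputable section

variable {X : Type*} [MetricSpace X] [MeasurableSpace X]

/-- `l^q` norm (`0<q≤∞`, with `q = ⊤` the sup) of a `ℤ`-indexed sequence in `ℝ≥0∞`. -/
def lqNorm (q : ℝ≥0∞) (a : ℤ → ℝ≥0∞) : ℝ≥0∞ :=
  if q = ⊤ then ⨆ k, a k else (∑' k, a k ^ q.toReal) ^ (1 / q.toReal)

/-- `L^p` "norm" (`0<p<∞`) of an `ℝ≥0∞`-valued function. -/
def LpE {X : Type*} [MeasurableSpace X] (μ : Measure X) (p : ℝ) (f : X → ℝ≥0∞) : ℝ≥0∞ :=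
  (∫⁻ x, f x ^ p ∂μ) ^ (1 / p)

/-- `L^p` norm of a real-valued function on the set `S`. -/
def LpS {X : Type*} [MeasurableSpace X] (μ : Measure X) (p : ℝ) (S : Set X) (u : X → ℝ) : ℝ≥0∞ :=
  LpE (μ.restrict S) p fun x => ENNReal.ofReal |u x|

/-- `(g k)_{k ∈ ℤ}` is a fractional `s`-gradient of `u` on `S`. -/
def IsFracGrad (μ : Measure X) (s : ℝ) (S : Set X) (u : X → ℝ) (g : ℤ → X → ℝ) : Prop :=
  (∀ k x, 0 ≤ g k x) ∧ (∀ k, Measurable (g k)) ∧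
    ∃ E : Set X, E ⊆ S ∧ μ E = 0 ∧ ∀ (k : ℤ), ∀ x ∈ S \ E, ∀ y ∈ S \ E,
      (2 : ℝ) ^ (-(k : ℝ) - 1) ≤ dist x y → dist x y < (2 : ℝ) ^ (-(k : ℝ)) →
        |u x - u y| ≤ dist x y ^ s * (g k x + g k y)

/-- The norm `‖(g k)‖_{L^p(S, l^q)}`. -/
def tlGradNorm (μ : Measure X) (p : ℝ) (q : ℝ≥0∞) (S : Set X) (g : ℤ → X → ℝ) : ℝ≥0∞ :=
  LpE (μ.restrict S) p fun x => lqNorm q fun k => ENNReal.ofReal (g k x)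

/-- The norm `‖(g k)‖_{l^q(L^p(S))}`. -/
def besovGradNorm (μ : Measure X) (p : ℝ) (q : ℝ≥0∞) (S : Set X) (g : ℤ → X → ℝ) : ℝ≥0∞ :=
  lqNorm q fun k => LpS μ p S (g k)

/-- The Hajłasz–Triebel–Lizorkin norm `‖u‖_{M^s_{p,q}(S)}`. -/
def TLNorm (μ : Measure X) (s p : ℝ) (q : ℝ≥0∞) (S : Set X) (u : X → ℝ) : ℝ≥0∞ :=
  LpS μ p S u + ⨅ (g : ℤ → X → ℝ) (_ : IsFracGrad μ s S u g), tlGradNorm μ p q S g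

/-- The Hajłasz–Besov norm `‖u‖_{N^s_{p,q}(S)}`. -/
def BesovNorm (μ : Measure X) (s p : ℝ) (q : ℝ≥0∞) (S : Set X) (u : X → ℝ) : ℝ≥0∞ :=
  LpS μ p S u + ⨅ (g : ℤ → X → ℝ) (_ : IsFracGrad μ s S u g), besovGradNorm μ p q S g

/-- `μ` is doubling with constant `cD`. -/
def IsDoubling (μ : Measure X) (cD : ℝ≥0∞) : Prop :=
  ∀ (x : X) (r : ℝ), 0 < r → μ (ball x (2 * r)) ≤ cD * μ (ball x r)

/-- Every ball has positive and finite measure. -/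
def BallsPosFin (μ : Measure X) : Prop :=
  ∀ (x : X) (r : ℝ), 0 < r → 0 < μ (ball x r) ∧ μ (ball x r) < ⊤

/-- The measure density condition for `S` with constant `cm`. -/
def MeasureDensity (μ : Measure X) (S : Set X) (cm : ℝ) : Prop :=
  ∀ x ∈ S, ∀ r : ℝ, 0 < r → r ≤ 1 → ENNReal.ofReal cm * μ (ball x r) ≤ μ (S ∩ ball x r)

/-- `X` is `Q`-regular with constant `cQ`. -/
def QRegular (μ : Measure X) (Q cQ : ℝ) : Prop :=
  1 ≤ cQ ∧ ∀ (x : X) (r : ℝ), 0 < r → ENNReal.ofReal r ≤ EMetric.diam (univ : Set X) →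
    ENNReal.ofReal (cQ⁻¹ * r ^ Q) ≤ μ (ball x r) ∧ μ (ball x r) ≤ ENNReal.ofReal (cQ * r ^ Q)

/-- `X` is geodesic: any two points are joined by an isometric curve. -/
def GeodesicSpace (X : Type*) [MetricSpace X] : Prop :=
  ∀ x y : X, ∃ γ : ℝ → X, γ 0 = x ∧ γ (dist x y) = y ∧
    ∀ a ∈ Icc (0 : ℝ) (dist x y), ∀ b ∈ Icc (0 : ℝ) (dist x y), dist (γ a) (γ b) = |a - b|

/-!
Write `u x * φ x - u y * φ y = (u x - u y) * φ y + u x * (φ x - φ y)`. The first term is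
controlled by `g k` and `‖φ‖_∞`, the second by `|u x|` times a bound
`|φ x - φ y| ≤ d(x,y)^s c_k` at scale `2^{-k}`: either `c_k = 2^{k(s-1)} L` from the Lipschitz
bound, or `c_k = 2^{sk+2} ‖φ‖_∞` from `|φ x - φ y| ≤ 2 ‖φ‖_∞`. Both exponent estimates reduce to
`t ≤ t^s` for `t = 2^k d(x,y) ∈ (0, 1]` and `s ≤ 1`. Both sides vanish unless `x` or `y` lies in
`supp φ`, and by symmetry we may take `x ∈ supp φ`; this is why `|u|` only needs to be charged at
`x`, and why the gradients carry the indicator of `supp φ`.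
-/

lemma mul_rpow_le_rpow_mul_rpow {b d s k : ℝ} (hb : 0 < b) (hd : 0 < d) (hdk : d < b ^ (-k))
    (hs : s ≤ 1) : d * b ^ k ≤ d ^ s * b ^ (s * k) := by
  have hbk : 0 < b ^ k := Real.rpow_pos_of_pos hb k
  have hle : d * b ^ k ≤ 1 := by
    calc d * b ^ k ≤ b ^ (-k) * b ^ k := by gcongr
      _ = 1 := by rw [Real.rpow_neg hb.le, inv_mul_cancel₀ hbk.ne']
  calc d * b ^ k = (d * b ^ k) ^ (1 : ℝ) := (Real.rpow_one _).symm
    _ ≤ (d * b ^ k) ^ s := Real.rpow_le_rpow_of_exponent_ge (by positivity) hle hs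
    _ = d ^ s * b ^ (s * k) := by
      rw [Real.mul_rpow hd.le hbk.le, ← Real.rpow_mul hb.le, mul_comm k s]

lemma le_rpow_mul_two_rpow {d s k : ℝ} (hd : 0 < d) (hdk : d < 2 ^ (-k)) (hs : s ≤ 1) :
    d ≤ d ^ s * 2 ^ (k * (s - 1)) := by
  calc d = d * 2 ^ k * 2 ^ (-k) := by
        rw [mul_assoc, ← Real.rpow_add two_pos, add_neg_cancel, Real.rpow_zero, mul_one]
    _ ≤ d ^ s * 2 ^ (s * k) * 2 ^ (-k) := by
        gcongr ?_ * _; exact mul_rpow_le_rpow_mul_rpow two_pos hd hdk hs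
    _ = d ^ s * 2 ^ (k * (s - 1)) := by
        rw [mul_assoc, ← Real.rpow_add two_pos]; ring_nf

lemma two_le_rpow_mul_two_rpow {d s k : ℝ} (hkd : 2 ^ (-k - 1) ≤ d) (hdk : d < 2 ^ (-k))
    (hs : s ≤ 1) : 2 ≤ d ^ s * 2 ^ (s * k + 2) := by
  have hd : 0 < d := (Real.rpow_pos_of_pos two_pos _).trans_le hkd
  calc (2 : ℝ) = 2 ^ (-k - 1) * 2 ^ k * 2 ^ (2 : ℝ) := by
        rw [← Real.rpow_add two_pos, ← Real.rpow_add two_pos, show -k - 1 + k + 2 = (1 : ℝ) by ring,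
          Real.rpow_one]
    _ ≤ d * 2 ^ k * 2 ^ (2 : ℝ) := by gcongr
    _ ≤ d ^ s * 2 ^ (s * k) * 2 ^ (2 : ℝ) := by
        gcongr ?_ * _; exact mul_rpow_le_rpow_mul_rpow two_pos hd hdk hs
    _ = d ^ s * 2 ^ (s * k + 2) := by rw [mul_assoc, ← Real.rpow_add two_pos]

lemma abs_mul_sub_mul_le (a b c d : ℝ) : |a * c - b * d| ≤ |a - b| * |d| + |a| * |c - d| := by
  calc |a * c - b * d| = |(a - b) * d + a * (c - d)| := by ring_nf
    _ ≤ |a - b| * |d| + |a| * |c - d| := by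
        rw [← abs_mul, ← abs_mul]; exact abs_add_le _ _

lemma isFracGrad_indicator_of_forall_mem {μ : Measure X} {s : ℝ} {A E : Set X} {w : X → ℝ}
    {ρ : ℤ → X → ℝ} (hA : MeasurableSet A) (hwA : Function.support w ⊆ A)
    (hρ0 : ∀ k, ∀ x ∈ A, 0 ≤ ρ k x) (hρm : ∀ k, Measurable (ρ k)) (hE : μ E = 0)
    (hρ : ∀ k : ℤ, ∀ x ∈ A \ E, ∀ y ∉ E, (2 : ℝ) ^ (-(k : ℝ) - 1) ≤ dist x y →
      dist x y < (2 : ℝ) ^ (-(k : ℝ)) →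
        |w x - w y| ≤ dist x y ^ s * (ρ k x + A.indicator (ρ k) y)) :
    IsFracGrad μ s univ w fun k => A.indicator (ρ k) := by
  refine ⟨fun k => indicator_nonneg (hρ0 k), fun k => (hρm k).indicator hA, E, subset_univ E,
    hE, fun k x ⟨_, hxE⟩ y ⟨_, hyE⟩ hkd hdk => ?_⟩
  dsimp only
  by_cases hxA : x ∈ A
  · rw [indicator_of_mem hxA]
    exact hρ k x ⟨hxA, hxE⟩ y hyE hkd hdk
  by_cases hyA : y ∈ A
  · rw [indicator_of_mem hyA, abs_sub_comm, dist_comm, add_comm]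
    exact hρ k y ⟨hyA, hyE⟩ x hxE (dist_comm x y ▸ hkd) (dist_comm x y ▸ hdk)
  · have hw : ∀ z ∉ A, w z = 0 := fun z hz => Function.notMem_support.mp fun h => hz (hwA h)
    simp [hw x hxA, hw y hyA, indicator_of_notMem hxA, indicator_of_notMem hyA]

theorem IsFracGrad.mul_indicator_support {μ : Measure X} {s M : ℝ} {u φ : X → ℝ}
    {g : ℤ → X → ℝ} {c : ℤ → ℝ} (hg : IsFracGrad μ s univ u g) (hu : Measurable u)
    (hφ : Measurable φ) (hφM : ∀ x, |φ x| ≤ M) (hc : ∀ k, 0 ≤ c k)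
    (hφc : ∀ (k : ℤ) x y, (2 : ℝ) ^ (-(k : ℝ) - 1) ≤ dist x y → dist x y < (2 : ℝ) ^ (-(k : ℝ)) →
      |φ x - φ y| ≤ dist x y ^ s * c k) :
    IsFracGrad μ s univ (fun x => u x * φ x)
      (fun k => (Function.support φ).indicator fun x => g k x * M + c k * |u x|) := by
  obtain ⟨hg0, hgm, E, -, hE, hgrad⟩ := hg
  refine isFracGrad_indicator_of_forall_mem (measurableSet_support hφ)
    (Function.support_mul_subset_right u φ)
    (fun k x hx => add_nonneg (mul_nonneg (hg0 k x) ((abs_nonneg _).trans (hφM x)))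
      (mul_nonneg (hc k) (abs_nonneg _)))
    (fun k => ((hgm k).mul_const M).add (hu.abs.const_mul _)) hE
    fun k x ⟨hx, hxE⟩ y hyE hkd hdk => ?_
  have hds : 0 ≤ dist x y ^ s := by positivity
  have hφxy : |u x| * |φ x - φ y| ≤ dist x y ^ s * (c k * |u x|) :=
    (mul_le_mul_of_nonneg_left (hφc k x y hkd hdk) (abs_nonneg (u x))).trans_eq (by ring)
  by_cases hy : y ∈ Function.support φ
  · have hM : 0 ≤ M := (abs_nonneg _).trans (hφM y)
    have hgxy : |u x - u y| * |φ y| ≤ dist x y ^ s * (g k x * M + g k y * M) := by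
      rw [← add_mul, ← mul_assoc]
      exact mul_le_mul (hgrad k x ⟨trivial, hxE⟩ y ⟨trivial, hyE⟩ hkd hdk) (hφM y) (abs_nonneg _)
        (mul_nonneg hds (add_nonneg (hg0 k x) (hg0 k y)))
    rw [indicator_of_mem hy]
    calc |u x * φ x - u y * φ y| ≤ |u x - u y| * |φ y| + |u x| * |φ x - φ y| :=
          abs_mul_sub_mul_le _ _ _ _
      _ ≤ dist x y ^ s * (g k x * M + g k y * M) + dist x y ^ s * (c k * |u x|) :=
          add_le_add hgxy hφxy
      _ ≤ _ := by linarith [mul_nonneg hds (mul_nonneg (hc k) (abs_nonneg (u y)))]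
  · have hφy : φ y = 0 := Function.notMem_support.mp hy
    rw [indicator_of_notMem hy, add_zero]
    calc |u x * φ x - u y * φ y| = |u x| * |φ x - φ y| := by rw [hφy]; simp [abs_mul]
      _ ≤ dist x y ^ s * (c k * |u x|) := hφxy
      _ ≤ _ := by linarith [mul_nonneg hds (mul_nonneg (hg0 k x) ((abs_nonneg _).trans (hφM x)))]

theorem leibniz_fracGrad_general
    {X : Type*} [MetricSpace X] [MeasurableSpace X] [BorelSpace X] (μ : Measure X)
    (s : ℝ) (hs1 : s < 1)
    (u φ : X → ℝ) (hu : Measurable u)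
    (L : ℝ) (hL : 0 ≤ L) (hφL : ∀ x y, |φ x - φ y| ≤ L * dist x y)
    (hφb : BddAbove (Set.range fun x => |φ x|))
    (g : ℤ → X → ℝ) (hg : IsFracGrad μ s univ u g) :
    IsFracGrad μ s univ (fun x => u x * φ x)
      (fun k => (Function.support φ).indicator
        fun x => g k x * (⨆ y, |φ y|) + (2:ℝ) ^ ((k:ℝ) * (s - 1)) * L * |u x|) ∧
    IsFracGrad μ s univ (fun x => u x * φ x)
      (fun k => (Function.support φ).indicator
        fun x => (g k x + (2:ℝ) ^ (s * (k:ℝ) + 2) * |u x|) * (⨆ y, |φ y|)) := by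
  set M := ⨆ y, |φ y|
  have hφM : ∀ x, |φ x| ≤ M := le_ciSup hφb
  have hM : 0 ≤ M := Real.iSup_nonneg fun _ => abs_nonneg _
  have hφ : Measurable φ :=
    (LipschitzWith.of_dist_le_mul (K := ⟨L, hL⟩) fun x y => hφL x y).continuous.measurable
  refine ⟨hg.mul_indicator_support hu hφ hφM (fun k => by positivity) fun k x y hkd hdk => ?_, ?_⟩
  · have hd : 0 < dist x y := (Real.rpow_pos_of_pos two_pos _).trans_le hkd
    calc |φ x - φ y| ≤ L * dist x y := hφL x y
      _ ≤ L * (dist x y ^ s * 2 ^ ((k : ℝ) * (s - 1))) :=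
          mul_le_mul_of_nonneg_left (le_rpow_mul_two_rpow hd hdk hs1.le) hL
      _ = _ := by ring
  · have hρ : ∀ k x, (g k x + (2:ℝ) ^ (s * (k:ℝ) + 2) * |u x|) * M =
        g k x * M + (2:ℝ) ^ (s * (k:ℝ) + 2) * M * |u x| := fun _ _ => by ring
    simp only [hρ]
    refine hg.mul_indicator_support hu hφ hφM (fun k => by positivity) fun k x y hkd hdk => ?_
    calc |φ x - φ y| ≤ 2 * M := (abs_sub _ _).trans (by linarith [hφM x, hφM y])
      _ ≤ dist x y ^ s * 2 ^ (s * (k : ℝ) + 2) * M :=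
          mul_le_mul_of_nonneg_right (two_le_rpow_mul_two_rpow hkd hdk hs1.le) hM
      _ = _ := by ring

/-- Leibniz-type rule: if `(g_k) ∈ 𝔻ˢ(u)` and `φ` is a bounded `L`-Lipschitz
function supported in `S`, then `(ρ_k)` and `(h_k)`, where
`ρ_k = (g_k ‖φ‖_∞ + 2^{k(s-1)} L |u|) χ_{supp φ}` and
`h_k = (g_k + 2^{sk+2} |u|) ‖φ‖_∞ χ_{supp φ}`, are fractional `s`-gradients of `uφ`. -/
theorem leibniz_fracGrad
    {X : Type*} [MetricSpace X] [MeasurableSpace X] [BorelSpace X] (μ : Measure X)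
    (s : ℝ) (hs0 : 0 < s) (hs1 : s < 1) (S : Set X)
    (u φ : X → ℝ) (hu : Measurable u)
    (L : ℝ) (hL : 0 ≤ L) (hφL : ∀ x y, |φ x - φ y| ≤ L * dist x y)
    (hφb : BddAbove (Set.range fun x => |φ x|))
    (hφS : Function.support φ ⊆ S)
    (g : ℤ → X → ℝ) (hg : IsFracGrad μ s univ u g) :
    IsFracGrad μ s univ (fun x => u x * φ x)
      (fun k => (Function.support φ).indicator
        fun x => g k x * (⨆ y, |φ y|) + (2:ℝ) ^ ((k:ℝ) * (s - 1)) * L * |u x|) ∧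
    IsFracGrad μ s univ (fun x => u x * φ x)
      (fun k => (Function.support φ).indicator
        fun x => (g k x + (2:ℝ) ^ (s * (k:ℝ) + 2) * |u x|) * (⨆ y, |φ y|)) :=
  leibniz_fracGrad_general μ s hs1 u φ hu L hL hφL hφb g hg

end
end

section
/- Let (X,d,μ) be a metric measure space, 0 < s < 1, 0 < p < ∞, 0 < q ≤ ∞, and let S ⊂ X be a measurable set. Let φ be a bounded L-Lipschitz function on X supported in S. Then there is a constant C > 0, depending only on p, q, s, L and ‖φ‖_∞, such that for every u ∈ M^s_{p,q}(S) (extended by zero outside S) the product uφ belongs to M^s_{p,q}(X) and ‖uφ‖_{M^s_{p,q}(X)} ≤ C ‖u‖_{M^s_{p,q}(S)}. The same statement holds with M^s_{p,q} replaced by N^s_{p,q}. -/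
open MeasureTheory Metric Set
open scoped ENNReal NNReal
noncomputable section

variable {X : Type*} [MetricSpace X] [MeasurableSpace X]

/-!
Let `ū = 1_S u`, `|φ| ≤ M` and `w_k = 2^(-min(s, 1-s)|k|)`. If `(g_k)` is a fractional
`s`-gradient of `u` on `S`, then `h_k = M 1_S g_k + (2M + L) w_k |ū|` is a fractional
`s`-gradient of `ū φ` on `X`.
At distance `d ∈ [2^(-k-1), 2^(-k))` the difference `ū φ (x) - ū φ (y)` is bounded both by
`M (|ū x| + |ū y|)` and, by the Leibniz rule, by `M d^s (g_k x + g_k y) + L d (|ū x| + |ū y|)`;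
the first bound is used for `k ≤ 0`, the second for `k > 0`, and in either case the coefficient of
`|ū x| + |ū y|` is at most `(2M + L) w_k d^s`. As `(w_k)` lies in every `l^q`, the
quasi-triangle inequalities of `l^q` and `L^p` bound both norms of `(h_k)` by a multiple of
the corresponding norm of `(g_k)` plus a multiple of `‖u‖_{L^p(S)}`; taking the infimum over `(g_k)`
gives the theorem.
-/

open ENNReal (LpAddConst LpAddConst_lt_top)

section QuasiNorms

variable {α : Type*} [MeasurableSpace α]

theorem LpAddConst_ne_zero (p : ℝ≥0∞) : LpAddConst p ≠ 0 := by
  unfold LpAddConst; split_ifs <;> simp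

theorem LpE_eq_eLpNorm (μ : Measure α) {p : ℝ} (hp : 0 < p) (f : α → ℝ≥0∞) :
    LpE μ p f = eLpNorm f (ENNReal.ofReal p) μ := by
  rw [eLpNorm_eq_eLpNorm' (by simpa using hp) ENNReal.ofReal_ne_top, ENNReal.toReal_ofReal hp.le]
  simp only [LpE, eLpNorm', enorm_eq_self]

theorem lqNorm_eq_eLpNorm {q : ℝ≥0∞} (hq : q ≠ 0) (a : ℤ → ℝ≥0∞) :
    lqNorm q a = eLpNorm a q Measure.count := by
  unfold lqNorm
  split_ifs with hq_top
  · simp [hq_top]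
  · rw [eLpNorm_eq_eLpNorm' hq hq_top]
    simp only [eLpNorm', enorm_eq_self, lintegral_count]

theorem LpS_eq_eLpNorm (μ : Measure α) {p : ℝ} (hp : 0 < p) (S : Set α) (u : α → ℝ) :
    LpS μ p S u = eLpNorm (fun x => ENNReal.ofReal |u x|) (ENNReal.ofReal p) (μ.restrict S) :=
  LpE_eq_eLpNorm _ hp _

theorem LpS_univ_indicator (μ : Measure α) {p : ℝ} (hp : 0 < p) {S : Set α}
    (hS : MeasurableSet S) (u : α → ℝ) : LpS μ p univ (S.indicator u) = LpS μ p S u := by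
  have h : (fun x => ENNReal.ofReal |S.indicator u x|)
      = S.indicator fun x => ENNReal.ofReal |u x| := by
    ext x; by_cases hx : x ∈ S <;> simp [hx]
  rw [LpS_eq_eLpNorm _ hp, LpS_eq_eLpNorm _ hp, Measure.restrict_univ, h,
    eLpNorm_indicator_eq_eLpNorm_restrict hS]

theorem eLpNorm_le_mul_add_mul {μ : Measure α} {f g₁ g₂ : α → ℝ≥0∞} {a b : ℝ≥0∞}
    (hg₁ : AEMeasurable g₁ μ) (hg₂ : AEMeasurable g₂ μ) (h : ∀ x, f x ≤ a * g₁ x + b * g₂ x)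
    (p : ℝ≥0∞) :
    eLpNorm f p μ ≤ LpAddConst p * (a * eLpNorm g₁ p μ + b * eLpNorm g₂ p μ) :=
  calc eLpNorm f p μ ≤ eLpNorm ((a • g₁) + (b • g₂)) p μ := eLpNorm_mono_enorm h
    _ ≤ LpAddConst p * (eLpNorm (a • g₁) p μ + eLpNorm (b • g₂) p μ) :=
      eLpNorm_add_le' (hg₁.const_mul a).aestronglyMeasurable
        (hg₂.const_mul b).aestronglyMeasurable p
    _ ≤ LpAddConst p * (a * eLpNorm g₁ p μ + b * eLpNorm g₂ p μ) := by
      gcongr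
      · exact eLpNorm_le_mul_eLpNorm_of_ae_le_mul'' p hg₁.aestronglyMeasurable
          (ae_of_all _ fun x => le_rfl)
      · exact eLpNorm_le_mul_eLpNorm_of_ae_le_mul'' p hg₂.aestronglyMeasurable
          (ae_of_all _ fun x => le_rfl)

theorem lqNorm_geometric_ne_top {q : ℝ≥0∞} (hq : q ≠ 0) {A r : ℝ} (hA : 0 ≤ A) (hr0 : 0 ≤ r)
    (hr1 : r < 1) : lqNorm q (fun k => ENNReal.ofReal (A * r ^ k.natAbs)) ≠ ⊤ := by
  unfold lqNorm
  split_ifs with hq_top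
  · refine ne_top_of_le_ne_top (ENNReal.ofReal_ne_top (r := A)) (iSup_le fun k => ?_)
    exact ENNReal.ofReal_le_ofReal (mul_le_of_le_one_right hA (pow_le_one₀ hr0 hr1.le))
  have ht : 0 < q.toReal := ENNReal.toReal_pos hq hq_top
  have hρ1 : r ^ q.toReal < 1 := Real.rpow_lt_one hr0 hr1 ht
  have hsum : Summable fun k : ℤ => A ^ q.toReal * (r ^ q.toReal) ^ k.natAbs := by
    have hgeom := (summable_geometric_of_lt_one (by positivity) hρ1).mul_left (A ^ q.toReal)
    exact .of_nat_of_neg (by simpa using hgeom) (by simpa using hgeom)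
  have hterm : ∀ k : ℤ, ENNReal.ofReal (A * r ^ k.natAbs) ^ q.toReal
      = ENNReal.ofReal (A ^ q.toReal * (r ^ q.toReal) ^ k.natAbs) := fun k => by
    rw [ENNReal.ofReal_rpow_of_nonneg (by positivity) ht.le, Real.mul_rpow hA (by positivity),
      Real.rpow_pow_comm hr0]
  simp_rw [hterm, ← ENNReal.ofReal_tsum_of_nonneg (fun k => by positivity) hsum]
  exact ENNReal.rpow_ne_top_of_nonneg (by positivity) ENNReal.ofReal_ne_top

theorem measurable_lqNorm {q : ℝ≥0∞} {F : ℤ → α → ℝ≥0∞} (hF : ∀ k, Measurable (F k)) :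
    Measurable fun x => lqNorm q fun k => F k x := by
  unfold lqNorm
  split_ifs
  · exact .iSup hF
  · exact (Measurable.tsum fun k => (hF k).pow_const _).pow_const _

theorem LpS_univ_indicator_mul_le (μ : Measure α) {p : ℝ} (hp : 0 < p) {S : Set α}
    (hS : MeasurableSet S) {u φ : α → ℝ} {M : ℝ} (hM : ∀ x, |φ x| ≤ M) :
    LpS μ p univ (fun x => S.indicator u x * φ x) ≤ ENNReal.ofReal M * LpS μ p S u := by
  rw [← LpS_univ_indicator μ hp hS, LpS_eq_eLpNorm _ hp, LpS_eq_eLpNorm _ hp]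
  refine eLpNorm_le_nnreal_smul_eLpNorm_of_ae_le_mul' (ae_of_all _ fun x => ?_) _
  simp only [enorm_eq_self]
  rw [← ENNReal.ofReal_coe_nnreal, Real.coe_toNNReal', ← ENNReal.ofReal_mul (le_max_right _ _)]
  gcongr
  rw [abs_mul, mul_comm]
  gcongr
  exact (hM x).trans (le_max_left _ _)

end QuasiNorms

section GradientNorms

variable {α : Type*} [MeasurableSpace α] {μ : Measure α} {p : ℝ} {q : ℝ≥0∞} {S : Set α} {M : ℝ}
  {c : ℤ → ℝ} {u : α → ℝ} {g : ℤ → α → ℝ}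

theorem tlGradNorm_univ_le (hp : 0 < p) (hq : q ≠ 0) (hS : MeasurableSet S) (hM : 0 ≤ M)
    (hc : ∀ k, 0 ≤ c k) (hu : Measurable u) (hg : ∀ k, Measurable (g k)) :
    tlGradNorm μ p q univ (fun k x => M * S.indicator (g k) x + c k * |S.indicator u x|)
      ≤ LpAddConst q * LpAddConst (ENNReal.ofReal p) *
        (ENNReal.ofReal M * tlGradNorm μ p q S g
          + lqNorm q (fun k => ENNReal.ofReal (c k)) * LpS μ p S u) := by
  set G : α → ℝ≥0∞ := fun x => lqNorm q fun k => ENNReal.ofReal (g k x)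
  have hG : ∀ x, (lqNorm q fun k => ENNReal.ofReal (S.indicator (g k) x)) = S.indicator G x := by
    intro x
    by_cases hx : x ∈ S <;> simp [hx, G, lqNorm_eq_eLpNorm hq]
  have hpoint : ∀ x,
      (lqNorm q fun k => ENNReal.ofReal (M * S.indicator (g k) x + c k * |S.indicator u x|))
        ≤ LpAddConst q * ENNReal.ofReal M * S.indicator G x
          + LpAddConst q * (lqNorm q fun k => ENNReal.ofReal (c k))
            * ENNReal.ofReal |S.indicator u x| := by
    intro x
    rw [← hG, lqNorm_eq_eLpNorm hq, lqNorm_eq_eLpNorm hq, lqNorm_eq_eLpNorm hq]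
    refine (eLpNorm_le_mul_add_mul (g₁ := fun k => ENNReal.ofReal (S.indicator (g k) x))
      (g₂ := fun k => ENNReal.ofReal (c k)) (a := ENNReal.ofReal M)
      (b := ENNReal.ofReal |S.indicator u x|)
      Measurable.of_discrete.aemeasurable Measurable.of_discrete.aemeasurable
      (fun k => ?_) q).trans_eq (by ring)
    refine ENNReal.ofReal_add_le.trans ?_
    rw [ENNReal.ofReal_mul hM, ENNReal.ofReal_mul (hc k), mul_comm (ENNReal.ofReal (c k))]
  have hGmeas : Measurable (S.indicator G) :=
    (measurable_lqNorm fun k => (hg k).ennreal_ofReal).indicator hS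
  have hVmeas : Measurable fun x => ENNReal.ofReal |S.indicator u x| :=
    ((hu.indicator hS).abs).ennreal_ofReal
  unfold tlGradNorm
  rw [Measure.restrict_univ, LpE_eq_eLpNorm _ hp, LpE_eq_eLpNorm _ hp]
  refine (eLpNorm_le_mul_add_mul hGmeas.aemeasurable hVmeas.aemeasurable hpoint _).trans_eq ?_
  rw [eLpNorm_indicator_eq_eLpNorm_restrict hS, ← LpS_univ_indicator μ hp hS u,
    LpS_eq_eLpNorm _ hp, Measure.restrict_univ]
  ring

theorem besovGradNorm_univ_le (hp : 0 < p) (hq : q ≠ 0) (hS : MeasurableSet S) (hM : 0 ≤ M)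
    (hc : ∀ k, 0 ≤ c k) (hu : Measurable u) (hg : ∀ k, Measurable (g k)) :
    besovGradNorm μ p q univ (fun k x => M * S.indicator (g k) x + c k * |S.indicator u x|)
      ≤ LpAddConst q * LpAddConst (ENNReal.ofReal p) *
        (ENNReal.ofReal M * besovGradNorm μ p q S g
          + lqNorm q (fun k => ENNReal.ofReal (c k)) * LpS μ p S u) := by
  have hterm : ∀ k, LpS μ p univ (fun x => M * S.indicator (g k) x + c k * |S.indicator u x|)
      ≤ LpAddConst (ENNReal.ofReal p) * ENNReal.ofReal M * LpS μ p S (g k)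
        + LpAddConst (ENNReal.ofReal p) * LpS μ p S u * ENNReal.ofReal (c k) := by
    intro k
    rw [← LpS_univ_indicator μ hp hS (g k), ← LpS_univ_indicator μ hp hS u,
      LpS_eq_eLpNorm _ hp, LpS_eq_eLpNorm _ hp, LpS_eq_eLpNorm _ hp]
    refine (eLpNorm_le_mul_add_mul (a := ENNReal.ofReal M) (b := ENNReal.ofReal (c k))
      ((hg k).indicator hS).abs.ennreal_ofReal.aemeasurable
      ((hu.indicator hS).abs).ennreal_ofReal.aemeasurable (fun x => ?_) _).trans_eq (by ring)
    rw [← ENNReal.ofReal_mul hM, ← ENNReal.ofReal_mul (hc k)]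
    refine (ENNReal.ofReal_le_ofReal ((abs_add_le _ _).trans_eq ?_)).trans ENNReal.ofReal_add_le
    rw [abs_mul, abs_mul, abs_of_nonneg hM, abs_of_nonneg (hc k), abs_abs]
  unfold besovGradNorm
  rw [lqNorm_eq_eLpNorm hq, lqNorm_eq_eLpNorm hq, lqNorm_eq_eLpNorm hq]
  exact (eLpNorm_le_mul_add_mul Measurable.of_discrete.aemeasurable
    Measurable.of_discrete.aemeasurable hterm _).trans_eq (by ring)

end GradientNorms

def dyadicWeight (s : ℝ) (k : ℤ) : ℝ := ((2 : ℝ) ^ (-min s (1 - s))) ^ k.natAbs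

theorem dyadicWeight_eq (s : ℝ) (k : ℤ) :
    dyadicWeight s k = 2 ^ (-(min s (1 - s) * |(k : ℝ)|)) := by
  rw [dyadicWeight, ← Real.rpow_natCast, ← Real.rpow_mul zero_le_two, Nat.cast_natAbs,
    Int.cast_abs, neg_mul]

theorem dyadicWeight_pos (s : ℝ) (k : ℤ) : 0 < dyadicWeight s k := by
  unfold dyadicWeight; positivity

theorem one_le_two_mul_rpow_mul_dyadicWeight {s d : ℝ} {k : ℤ} (hs0 : 0 ≤ s) (hs1 : s ≤ 1)
    (hk : k ≤ 0) (hd : (2 : ℝ) ^ (-(k : ℝ) - 1) ≤ d) : 1 ≤ 2 * (d ^ s * dyadicWeight s k) := by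
  have hk' : (k : ℝ) ≤ 0 := Int.cast_nonpos.mpr hk
  have hexp : -1 ≤ (-(k : ℝ) - 1) * s + -(min s (1 - s) * -(k : ℝ)) := by
    nlinarith [mul_nonneg (neg_nonneg.mpr hk') (sub_nonneg.mpr (min_le_left s (1 - s)))]
  rw [dyadicWeight_eq, abs_of_nonpos hk']
  calc (1 : ℝ) = 2 * 2 ^ (-1 : ℝ) := by norm_num
    _ ≤ 2 * 2 ^ ((-(k : ℝ) - 1) * s + -(min s (1 - s) * -(k : ℝ))) := by
      gcongr; exact one_le_two
    _ = 2 * ((2 ^ (-(k : ℝ) - 1)) ^ s * 2 ^ (-(min s (1 - s) * -(k : ℝ)))) := by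
      rw [Real.rpow_add two_pos, Real.rpow_mul zero_le_two]
    _ ≤ 2 * (d ^ s * 2 ^ (-(min s (1 - s) * -(k : ℝ)))) := by gcongr

theorem rpow_one_sub_le_dyadicWeight {s d : ℝ} {k : ℤ} (hs1 : s ≤ 1) (hk : 0 ≤ k) (hd0 : 0 ≤ d)
    (hd : d < (2 : ℝ) ^ (-(k : ℝ))) : d ^ (1 - s) ≤ dyadicWeight s k := by
  have hk' : (0 : ℝ) ≤ k := mod_cast hk
  rw [dyadicWeight_eq, abs_of_nonneg hk']
  calc d ^ (1 - s) ≤ ((2 : ℝ) ^ (-(k : ℝ))) ^ (1 - s) := by gcongr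
    _ = 2 ^ (-(k : ℝ) * (1 - s)) := by rw [← Real.rpow_mul zero_le_two]
    _ ≤ 2 ^ (-(min s (1 - s) * k)) := by
      gcongr
      · exact one_le_two
      · nlinarith [mul_le_mul_of_nonneg_right (min_le_right s (1 - s)) hk']

theorem min_le_rpow_mul_dyadicWeight {s d M L : ℝ} {k : ℤ} (hs0 : 0 ≤ s) (hs1 : s ≤ 1)
    (hM : 0 ≤ M) (hL : 0 ≤ L) (hd1 : (2 : ℝ) ^ (-(k : ℝ) - 1) ≤ d)
    (hd2 : d < (2 : ℝ) ^ (-(k : ℝ))) :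
    min M (L * d) ≤ d ^ s * ((2 * M + L) * dyadicWeight s k) := by
  have hd0 : 0 < d := (Real.rpow_pos_of_pos two_pos _).trans_le hd1
  have hw : 0 ≤ d ^ s * dyadicWeight s k := by have := dyadicWeight_pos s k; positivity
  rcases le_or_gt k 0 with hk | hk
  · have h1 := one_le_two_mul_rpow_mul_dyadicWeight hs0 hs1 hk hd1
    nlinarith [min_le_left M (L * d), mul_nonneg hL hw]
  · have h1 := rpow_one_sub_le_dyadicWeight hs1 hk.le hd0.le hd2
    have hsplit : d = d ^ s * d ^ (1 - s) := by
      rw [← Real.rpow_add hd0, add_sub_cancel, Real.rpow_one]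
    calc min M (L * d) ≤ L * (d ^ s * d ^ (1 - s)) := hsplit ▸ min_le_right _ _
      _ ≤ L * (d ^ s * dyadicWeight s k) := by gcongr
      _ ≤ d ^ s * ((2 * M + L) * dyadicWeight s k) := by nlinarith [mul_nonneg hM hw]

theorem lqNorm_dyadicWeight_ne_top {q : ℝ≥0∞} (hq : q ≠ 0) {s : ℝ} (hs0 : 0 < s) (hs1 : s < 1)
    {A : ℝ} (hA : 0 ≤ A) : lqNorm q (fun k => ENNReal.ofReal (A * dyadicWeight s k)) ≠ ⊤ :=
  lqNorm_geometric_ne_top hq hA (by positivity)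
    (Real.rpow_lt_one_of_one_lt_of_neg one_lt_two (neg_lt_zero.mpr (lt_min hs0 (by linarith))))

theorem abs_indicator_mul_sub_indicator_mul_le {α : Type*} {S : Set α} {u φ : α → ℝ}
    {M δ ℓ : ℝ} {x y : α} (hφS : Function.support φ ⊆ S) (hM : |φ x| ≤ M)
    (hφ : |φ x - φ y| ≤ ℓ) (hδ : 0 ≤ δ) (hu : x ∈ S → y ∈ S → |u x - u y| ≤ δ) :
    |S.indicator u x * φ x - S.indicator u y * φ y|
      ≤ M * δ + ℓ * (|S.indicator u x| + |S.indicator u y|) := by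
  have hM0 : 0 ≤ M := (abs_nonneg _).trans hM
  have hℓ : 0 ≤ ℓ := (abs_nonneg _).trans hφ
  by_cases hxy : x ∈ S ∧ y ∈ S
  · obtain ⟨hx, hy⟩ := hxy
    simp only [indicator_of_mem hx, indicator_of_mem hy]
    calc |u x * φ x - u y * φ y| = |φ x * (u x - u y) + u y * (φ x - φ y)| := by ring_nf
      _ ≤ M * δ + |u y| * ℓ := by
        refine (abs_add_le _ _).trans ?_
        rw [abs_mul, abs_mul]
        gcongr
        exact hu hx hy
      _ ≤ M * δ + ℓ * (|u x| + |u y|) := by nlinarith [abs_nonneg (u x)]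
  · have hφ0 : ∀ z ∉ S, φ z = 0 := fun z hz => Function.notMem_support.mp fun h => hz (hφS h)
    have hcross : S.indicator u x * φ y = 0 ∧ S.indicator u y * φ x = 0 := by
      rcases not_and_or.mp hxy with h | h <;> simp [h, hφ0]
    calc |S.indicator u x * φ x - S.indicator u y * φ y|
        = |(S.indicator u x + S.indicator u y) * (φ x - φ y)| := by
          congr 1; linear_combination hcross.1 - hcross.2
      _ ≤ (|S.indicator u x| + |S.indicator u y|) * ℓ := by
          rw [abs_mul]; gcongr; exact abs_add_le _ _
      _ ≤ M * δ + ℓ * (|S.indicator u x| + |S.indicator u y|) := by nlinarith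

theorem isFracGrad_indicator_mul {μ : Measure X} {s : ℝ} (hs0 : 0 ≤ s) (hs1 : s ≤ 1)
    {S : Set X} (hS : MeasurableSet S) {φ : X → ℝ} {L M : ℝ} (hL : 0 ≤ L)
    (hφL : ∀ x y, |φ x - φ y| ≤ L * dist x y) (hM0 : 0 ≤ M) (hM : ∀ x, |φ x| ≤ M)
    (hφS : Function.support φ ⊆ S) {u : X → ℝ} (hu : Measurable u) {g : ℤ → X → ℝ}
    (hg : IsFracGrad μ s S u g) :
    IsFracGrad μ s univ (fun x => S.indicator u x * φ x) fun k x =>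
      M * S.indicator (g k) x + (2 * M + L) * dyadicWeight s k * |S.indicator u x| := by
  obtain ⟨hg0, hgmeas, E, hES, hE0, hgrad⟩ := hg
  have hgS : ∀ k x, 0 ≤ S.indicator (g k) x := fun k => indicator_nonneg fun x _ => hg0 k x
  refine ⟨fun k x => ?_, fun k => ?_, E, subset_univ _ |>.trans' hES, hE0, ?_⟩
  · have := hgS k x; have := dyadicWeight_pos s k; positivity
  · exact (measurable_const.mul ((hgmeas k).indicator hS)).add
      (measurable_const.mul (hu.indicator hS).abs)
  intro k x hx y hy hd1 hd2
  set d := dist x y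
  set T := |S.indicator u x| + |S.indicator u y|
  have hd0 : 0 < d := (Real.rpow_pos_of_pos two_pos _).trans_le hd1
  have hT : 0 ≤ T := by positivity
  have hleibniz := abs_indicator_mul_sub_indicator_mul_le hφS (hM x) (hφL x y)
    (δ := d ^ s * (S.indicator (g k) x + S.indicator (g k) y))
    (by have := hgS k x; have := hgS k y; positivity) fun hxS hyS => by
      simpa [indicator_of_mem hxS, indicator_of_mem hyS] using
        hgrad k x ⟨hxS, hx.2⟩ y ⟨hyS, hy.2⟩ hd1 hd2
  have hcrude : |S.indicator u x * φ x - S.indicator u y * φ y| ≤ M * T := by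
    refine (abs_sub _ _).trans ?_
    rw [abs_mul, abs_mul]
    nlinarith [hM x, hM y, abs_nonneg (S.indicator u x), abs_nonneg (S.indicator u y)]
  calc |S.indicator u x * φ x - S.indicator u y * φ y|
      ≤ M * (d ^ s * (S.indicator (g k) x + S.indicator (g k) y)) + min M (L * d) * T := by
        rw [min_mul_of_nonneg _ _ hT, ← min_add_add_left]
        refine le_min (hcrude.trans (le_add_of_nonneg_left ?_)) hleibniz
        have := hgS k x; have := hgS k y; positivity
    _ ≤ M * (d ^ s * (S.indicator (g k) x + S.indicator (g k) y))
        + d ^ s * ((2 * M + L) * dyadicWeight s k) * T := by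
        gcongr; exact min_le_rpow_mul_dyadicWeight hs0 hs1 hM0 hL hd1 hd2
    _ = _ := by ring

theorem add_iInf_isFracGrad_le {μ : Measure X} {s p : ℝ} (N : Set X → (ℤ → X → ℝ) → ℝ≥0∞)
    {S T : Set X} {u v : X → ℝ} {A B C : ℝ≥0∞} (hC0 : C ≠ 0) (hC : C ≠ ⊤)
    (hLp : LpS μ p T v ≤ A * LpS μ p S u)
    (hgrad : ∀ g, IsFracGrad μ s S u g →
      ∃ h, IsFracGrad μ s T v h ∧ N T h ≤ C * N S g + B * LpS μ p S u) :
    LpS μ p T v + ⨅ (h : ℤ → X → ℝ) (_ : IsFracGrad μ s T v h), N T h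
      ≤ (A + B + C) * (LpS μ p S u + ⨅ (g : ℤ → X → ℝ) (_ : IsFracGrad μ s S u g), N S g) := by
  set Iu := ⨅ (g : ℤ → X → ℝ) (_ : IsFracGrad μ s S u g), N S g
  have hinf : ⨅ (h : ℤ → X → ℝ) (_ : IsFracGrad μ s T v h), N T h ≤ C * Iu + B * LpS μ p S u :=
    calc _ ≤ ⨅ (g : ℤ → X → ℝ) (_ : IsFracGrad μ s S u g), C * N S g + B * LpS μ p S u :=
          le_iInf₂ fun g hg => by
            obtain ⟨h, hh, hle⟩ := hgrad g hg
            exact (iInf₂_le h hh).trans hle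
      _ = C * Iu + B * LpS μ p S u := by
          simp_rw [Iu, ENNReal.mul_iInf_of_ne hC0 hC, ENNReal.iInf_add]
  calc _ ≤ A * LpS μ p S u + (C * Iu + B * LpS μ p S u) := add_le_add hLp hinf
    _ = (A + B) * LpS μ p S u + C * Iu := by ring
    _ ≤ (A + B + C) * LpS μ p S u + (A + B + C) * Iu :=
        add_le_add (mul_le_mul_left le_self_add _) (mul_le_mul_left le_add_self _)
    _ = _ := (mul_add _ _ _).symm

theorem mul_lipschitz_bounded_general
    {X : Type*} [MetricSpace X] [MeasurableSpace X] (μ : Measure X)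
    (s p : ℝ) (q : ℝ≥0∞) (hs0 : 0 < s) (hs1 : s < 1) (hp : 0 < p) (hq : 0 < q)
    (S : Set X) (hS : MeasurableSet S)
    (φ : X → ℝ) (L : ℝ) (hL : 0 ≤ L) (hφL : ∀ x y, |φ x - φ y| ≤ L * dist x y)
    (hφb : BddAbove (Set.range fun x => |φ x|)) (hφS : Function.support φ ⊆ S) :
    ∃ C : ℝ, 0 < C ∧ ∀ u : X → ℝ, Measurable u →
      (TLNorm μ s p q S u ≠ ⊤ →
        TLNorm μ s p q univ (fun x => S.indicator u x * φ x) ≠ ⊤ ∧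
        TLNorm μ s p q univ (fun x => S.indicator u x * φ x)
          ≤ ENNReal.ofReal C * TLNorm μ s p q S u) ∧
      (BesovNorm μ s p q S u ≠ ⊤ →
        BesovNorm μ s p q univ (fun x => S.indicator u x * φ x) ≠ ⊤ ∧
        BesovNorm μ s p q univ (fun x => S.indicator u x * φ x)
          ≤ ENNReal.ofReal C * BesovNorm μ s p q S u) := by
  obtain ⟨M, hM0, hM⟩ : ∃ M : ℝ, 0 < M ∧ ∀ x, |φ x| ≤ M := by
    obtain ⟨M, hM⟩ := hφb
    exact ⟨max M 1, by positivity, fun x => (hM ⟨x, rfl⟩).trans (le_max_left _ _)⟩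
  set c : ℤ → ℝ := fun k => (2 * M + L) * dyadicWeight s k
  have hc : ∀ k, 0 ≤ c k := fun k => by have := dyadicWeight_pos s k; positivity
  set Cp := LpAddConst q * LpAddConst (ENNReal.ofReal p)
  have hCp0 : Cp ≠ 0 := mul_ne_zero (LpAddConst_ne_zero _) (LpAddConst_ne_zero _)
  have hCp : Cp ≠ ⊤ := ENNReal.mul_ne_top (LpAddConst_lt_top _).ne (LpAddConst_lt_top _).ne
  set K := lqNorm q fun k => ENNReal.ofReal (c k)
  have hK : K ≠ ⊤ := lqNorm_dyadicWeight_ne_top hq.ne' hs0 hs1 (by positivity)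
  set D := ENNReal.ofReal M + Cp * K + Cp * ENNReal.ofReal M
  have hD : D ≠ ⊤ := by finiteness
  have hD0 : D ≠ 0 := by simp [D, hCp0, hM0]
  refine ⟨D.toReal, ENNReal.toReal_pos hD0 hD, fun u hu => ?_⟩
  have hbound (N : Set X → (ℤ → X → ℝ) → ℝ≥0∞) (hN : ∀ g, IsFracGrad μ s S u g →
      N univ (fun k x => M * S.indicator (g k) x + c k * |S.indicator u x|)
        ≤ Cp * (ENNReal.ofReal M * N S g + K * LpS μ p S u)) :=
    add_iInf_isFracGrad_le N (B := Cp * K) (mul_ne_zero hCp0 (by simpa using hM0))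
      (ENNReal.mul_ne_top hCp ENNReal.ofReal_ne_top) (LpS_univ_indicator_mul_le μ hp hS hM)
      fun g hg => ⟨_, isFracGrad_indicator_mul hs0.le hs1.le hS hL hφL hM0.le hM hφS hu hg,
        (hN g hg).trans_eq (by ring)⟩
  have hTL := hbound (tlGradNorm μ p q) fun g hg =>
    tlGradNorm_univ_le hp hq.ne' hS hM0.le hc hu hg.2.1
  have hBesov := hbound (besovGradNorm μ p q) fun g hg =>
    besovGradNorm_univ_le hp hq.ne' hS hM0.le hc hu hg.2.1
  rw [ENNReal.ofReal_toReal hD]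
  exact ⟨fun hfin => ⟨ne_top_of_le_ne_top (ENNReal.mul_ne_top hD hfin) hTL, hTL⟩,
    fun hfin => ⟨ne_top_of_le_ne_top (ENNReal.mul_ne_top hD hfin) hBesov, hBesov⟩⟩

/-- Multiplication by a bounded Lipschitz function `φ` supported in `S` maps
`M^s_{p,q}(S)` (resp. `N^s_{p,q}(S)`) boundedly into `M^s_{p,q}(X)` (resp. `N^s_{p,q}(X)`),
where `u` is extended by zero outside `S`. -/
theorem mul_lipschitz_bounded
    {X : Type*} [MetricSpace X] [MeasurableSpace X] [BorelSpace X] (μ : Measure X)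
    (s p : ℝ) (q : ℝ≥0∞) (hs0 : 0 < s) (hs1 : s < 1) (hp : 0 < p) (hq : 0 < q)
    (S : Set X) (hS : MeasurableSet S)
    (φ : X → ℝ) (L : ℝ) (hL : 0 ≤ L) (hφL : ∀ x y, |φ x - φ y| ≤ L * dist x y)
    (hφb : BddAbove (Set.range fun x => |φ x|)) (hφS : Function.support φ ⊆ S) :
    ∃ C : ℝ, 0 < C ∧ ∀ u : X → ℝ, Measurable u →
      (TLNorm μ s p q S u ≠ ⊤ →
        TLNorm μ s p q univ (fun x => S.indicator u x * φ x) ≠ ⊤ ∧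
        TLNorm μ s p q univ (fun x => S.indicator u x * φ x)
          ≤ ENNReal.ofReal C * TLNorm μ s p q S u) ∧
      (BesovNorm μ s p q S u ≠ ⊤ →
        BesovNorm μ s p q univ (fun x => S.indicator u x * φ x) ≠ ⊤ ∧
        BesovNorm μ s p q univ (fun x => S.indicator u x * φ x)
          ≤ ENNReal.ofReal C * BesovNorm μ s p q S u) :=
  mul_lipschitz_bounded_general μ s p q hs0 hs1 hp hq S hS φ L hL hφL hφb hφS
end
end

section
/- Let (X,d,μ) be a metric measure space, let 0 < s < 1, 0 < p < ∞ and 0 < q ≤ ∞. Let Ω ⊂ X be a measurable set and let φ : Ω → ℝ be an L-Lipschitz function supported in a bounded measurable set F ⊂ Ω. Then φ ∈ M^s_{p,q}(Ω) and ‖φ‖_{M^s_{p,q}(Ω)} ≤ C (1 + ‖φ‖_∞)(1 + L^s) μ(F)^{1/p}, where the constant C > 0 depends only on s and q. The same estimate holds with M^s_{p,q}(Ω) replaced by N^s_{p,q}(Ω). -/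
open MeasureTheory Metric Set
open scoped ENNReal NNReal
noncomputable section

variable {X : Type*} [MetricSpace X] [MeasurableSpace X]

/-!
Take `g k = c k · 1_F` with `c k = A · min (2 ^ ((t - k)(1 - s))) (2 ^ (-(t - k) s))`. At distances
`d ≈ 2 ^ (-k)` the Lipschitz bound `L d` is at most `d ^ s` times the first entry of the minimum and
the trivial bound `2 ‖φ‖_∞` is at most `d ^ s` times the second, once `A` and the crossover scale
`2 ^ (-t)` are chosen with `A ≲ (1 + L ^ s)(1 + ‖φ‖_∞)`. The weight decays geometrically in `|k - t|`
on both sides because `0 < s < 1`, so its `l^q` norm is bounded independently of `t`. Both the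
Triebel–Lizorkin and the Besov gradient norm of `g` equal `‖c‖_{l^q} μ(F) ^ (1/p)`, and
`‖φ‖_{L^p} ≤ ‖φ‖_∞ μ(F) ^ (1/p)`.
-/

lemma lqNorm_mono {q : ℝ≥0∞} {a b : ℤ → ℝ≥0∞} (h : ∀ k, a k ≤ b k) :
    lqNorm q a ≤ lqNorm q b := by
  unfold lqNorm
  split
  · exact iSup_mono h
  · gcongr with k
    exact h k

lemma lqNorm_const_mul {q : ℝ≥0∞} (hq : 0 < q) (c : ℝ≥0∞) (a : ℤ → ℝ≥0∞) :
    lqNorm q (fun k => c * a k) = c * lqNorm q a := by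
  unfold lqNorm
  split
  · exact (ENNReal.mul_iSup c a).symm
  · rename_i hq_top
    have hτ : 0 < q.toReal := ENNReal.toReal_pos hq.ne' hq_top
    simp only [ENNReal.mul_rpow_of_nonneg _ _ hτ.le, ENNReal.tsum_mul_left]
    rw [ENNReal.mul_rpow_of_nonneg _ _ (by positivity), ← ENNReal.rpow_mul,
      mul_one_div_cancel hτ.ne', ENNReal.rpow_one]

lemma lqNorm_zero {q : ℝ≥0∞} (hq : 0 < q) : lqNorm q (fun _ => 0) = 0 := by
  simpa using lqNorm_const_mul hq 0 fun _ => 0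

lemma tsum_int_pow_natAbs_le {R : ℝ≥0∞} (hR : R ≤ 1) :
    ∑' k : ℤ, R ^ k.natAbs ≤ 2 * (1 - R)⁻¹ := by
  have hfun : (fun k : ℤ => R ^ k.natAbs)
      = Int.rec (fun n : ℕ => R ^ n) (fun n : ℕ => R ^ (n + 1)) := by
    funext k
    cases k <;> rfl
  rw [hfun, tsum_int_rec ENNReal.summable ENNReal.summable,
    ENNReal.tsum_geometric, ENNReal.tsum_geometric_add_one, two_mul]
  gcongr
  exact mul_le_of_le_one_left zero_le hR

lemma exists_tsum_two_rpow_neg_abs_sub_le {δ : ℝ} (hδ : 0 < δ) :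
    ∃ C : ℝ≥0∞, C ≠ ⊤ ∧ ∀ t : ℝ, ∑' k : ℤ, ENNReal.ofReal (2 ^ (-δ * |k - t|)) ≤ C := by
  set r : ℝ := 2 ^ (-δ)
  have hr0 : 0 ≤ r := by positivity
  have hr1 : ENNReal.ofReal r < 1 :=
    ENNReal.ofReal_lt_one.mpr (Real.rpow_lt_one_of_one_lt_of_neg one_lt_two (by linarith))
  refine ⟨ENNReal.ofReal (2 ^ δ) * (2 * (1 - ENNReal.ofReal r)⁻¹), ?_, fun t => ?_⟩
  · exact ENNReal.mul_ne_top ENNReal.ofReal_ne_top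
      (ENNReal.mul_ne_top (by norm_num) (ENNReal.inv_ne_top.mpr (tsub_pos_of_lt hr1).ne'))
  have hterm : ∀ k : ℤ, ENNReal.ofReal (2 ^ (-δ * |k - t|))
      ≤ ENNReal.ofReal (2 ^ δ) * ENNReal.ofReal r ^ (k - ⌊t⌋).natAbs := by
    intro k
    have hfloor : |(k : ℝ) - ⌊t⌋| ≤ |k - t| + 1 := by
      have := abs_sub_le (k : ℝ) t ⌊t⌋
      rw [abs_of_nonneg (sub_nonneg.mpr (Int.floor_le t))] at this
      linarith [Int.lt_floor_add_one t]
    rw [← ENNReal.ofReal_pow hr0, ← ENNReal.ofReal_mul (by positivity)]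
    refine ENNReal.ofReal_le_ofReal ?_
    rw [← Real.rpow_natCast, ← Real.rpow_mul zero_le_two, ← Real.rpow_add two_pos,
      Nat.cast_natAbs, Int.cast_abs, Int.cast_sub]
    exact Real.rpow_le_rpow_of_exponent_le one_le_two (by nlinarith)
  calc ∑' k : ℤ, ENNReal.ofReal (2 ^ (-δ * |k - t|))
      ≤ ∑' k : ℤ, ENNReal.ofReal (2 ^ δ) * ENNReal.ofReal r ^ (k - ⌊t⌋).natAbs :=
        ENNReal.tsum_le_tsum hterm
    _ = ENNReal.ofReal (2 ^ δ) * ∑' k : ℤ, ENNReal.ofReal r ^ k.natAbs := by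
        rw [ENNReal.tsum_mul_left,
          ← (Equiv.subRight ⌊t⌋).tsum_eq fun k : ℤ => ENNReal.ofReal r ^ k.natAbs]
        rfl
    _ ≤ _ := by gcongr; exact tsum_int_pow_natAbs_le hr1.le

lemma exists_lqNorm_two_rpow_neg_abs_sub_le {q : ℝ≥0∞} (hq : 0 < q) {δ : ℝ} (hδ : 0 < δ) :
    ∃ C : ℝ≥0, ∀ t : ℝ, lqNorm q (fun k => ENNReal.ofReal (2 ^ (-δ * |k - t|))) ≤ C := by
  by_cases hq_top : q = ⊤
  · refine ⟨1, fun t => ?_⟩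
    rw [lqNorm, if_pos hq_top, ENNReal.coe_one]
    exact iSup_le fun k => ENNReal.ofReal_le_one.mpr
      (Real.rpow_le_one_of_one_le_of_nonpos one_le_two
        (mul_nonpos_of_nonpos_of_nonneg (by linarith) (abs_nonneg _)))
  have hτ : 0 < q.toReal := ENNReal.toReal_pos hq.ne' hq_top
  obtain ⟨C, hC, hsum⟩ := exists_tsum_two_rpow_neg_abs_sub_le (mul_pos hδ hτ)
  refine ⟨(C ^ (1 / q.toReal)).toNNReal, fun t => ?_⟩
  rw [ENNReal.coe_toNNReal (ENNReal.rpow_ne_top_of_nonneg (by positivity) hC), lqNorm,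
    if_neg hq_top]
  gcongr
  refine (le_of_eq (tsum_congr fun k => ?_)).trans (hsum t)
  rw [ENNReal.ofReal_rpow_of_nonneg (by positivity) hτ.le, ← Real.rpow_mul zero_le_two]
  ring_nf

def gradWeight (s x : ℝ) : ℝ := min (2 ^ (x * (1 - s))) (2 ^ (-(x * s)))

lemma gradWeight_nonneg (s x : ℝ) : 0 ≤ gradWeight s x :=
  le_min (by positivity) (by positivity)

lemma gradWeight_le (s x : ℝ) : gradWeight s x ≤ 2 ^ (-min s (1 - s) * |x|) := by
  rcases le_total x 0 with hx | hx
  · refine (min_le_left _ _).trans (Real.rpow_le_rpow_of_exponent_le one_le_two ?_)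
    rw [abs_of_nonpos hx]
    nlinarith [min_le_right s (1 - s)]
  · refine (min_le_right _ _).trans (Real.rpow_le_rpow_of_exponent_le one_le_two ?_)
    rw [abs_of_nonneg hx]
    nlinarith [min_le_left s (1 - s)]

lemma exists_lqNorm_gradWeight_le {q : ℝ≥0∞} (hq : 0 < q) {s : ℝ} (hs0 : 0 < s) (hs1 : s < 1) :
    ∃ C : ℝ≥0, ∀ t : ℝ, lqNorm q (fun k => ENNReal.ofReal (gradWeight s (t - k))) ≤ C := by
  obtain ⟨C, hC⟩ := exists_lqNorm_two_rpow_neg_abs_sub_le hq (lt_min hs0 (sub_pos.mpr hs1))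
  refine ⟨C, fun t => (lqNorm_mono fun k => ENNReal.ofReal_le_ofReal ?_).trans (hC t)⟩
  rw [abs_sub_comm]
  exact gradWeight_le s _

lemma mul_le_rpow_mul_rpow {s L d r : ℝ} (hs1 : s ≤ 1) (hL : 0 ≤ L) (hd : 0 < d) (hdr : d ≤ r) :
    L * d ≤ d ^ s * (L * r ^ (1 - s)) := by
  have hd_split : d ^ s * d ^ (1 - s) = d := by
    rw [← Real.rpow_add hd, add_sub_cancel, Real.rpow_one]
  calc L * d = d ^ s * (L * d ^ (1 - s)) := by rw [mul_left_comm, hd_split]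
    _ ≤ d ^ s * (L * r ^ (1 - s)) := by gcongr

lemma two_mul_le_rpow_mul_rpow {s M d r : ℝ} (hs0 : 0 ≤ s) (hs1 : s ≤ 1) (hM : 0 ≤ M)
    (hd : 0 < d) (hr : 0 < r) (hrd : r ≤ 2 * d) :
    2 * M ≤ d ^ s * (4 * M * r ^ (-s)) := by
  have hratio : 1 / 2 ≤ d ^ s * r ^ (-s) := by
    rw [Real.rpow_neg hr.le, ← div_eq_mul_inv, ← Real.div_rpow hd.le hr.le]
    calc (1 / 2 : ℝ) = (1 / 2) ^ (1 : ℝ) := (Real.rpow_one _).symm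
      _ ≤ (1 / 2) ^ s := Real.rpow_le_rpow_of_exponent_ge (by norm_num) (by norm_num) hs1
      _ ≤ (d / r) ^ s := Real.rpow_le_rpow (by norm_num) (by rw [le_div_iff₀ hr]; linarith) hs0
  nlinarith

lemma min_mul_le_rpow_mul_gradWeight {s L M A t d : ℝ} {k : ℤ} (hs0 : 0 ≤ s) (hs1 : s ≤ 1)
    (hL : 0 ≤ L) (hM : 0 ≤ M) (hA : 0 ≤ A)
    (hLA : L ≤ A * 2 ^ (t * (1 - s))) (hMA : 4 * M ≤ A * 2 ^ (-(t * s)))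
    (hd1 : 2 ^ (-(k : ℝ) - 1) ≤ d) (hd2 : d < 2 ^ (-(k : ℝ))) :
    min (L * d) (2 * M) ≤ d ^ s * (A * gradWeight s (t - k)) := by
  set r : ℝ := 2 ^ (-(k : ℝ))
  have hd : 0 < d := (by positivity : (0 : ℝ) < 2 ^ (-(k : ℝ) - 1)).trans_le hd1
  have hrd : r ≤ 2 * d := by
    have hr : r = 2 ^ (-(k : ℝ) - 1) * 2 := by
      rw [← Real.rpow_add_one two_ne_zero, sub_add_cancel]
    linarith
  have hsplit : ∀ a : ℝ, (2 : ℝ) ^ ((t - k) * a) = 2 ^ (t * a) * r ^ a := fun a => by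
    rw [← Real.rpow_mul zero_le_two, ← Real.rpow_add two_pos]
    ring_nf
  have h1 : A * 2 ^ ((t - k) * (1 - s)) = A * 2 ^ (t * (1 - s)) * r ^ (1 - s) := by
    rw [hsplit, mul_assoc]
  have h2 : A * 2 ^ (-((t - k) * s)) = A * 2 ^ (-(t * s)) * r ^ (-s) := by
    rw [← mul_neg, hsplit, mul_assoc, mul_neg]
  rw [gradWeight, mul_min_of_nonneg _ _ hA, mul_min_of_nonneg _ _ (by positivity), h1, h2]
  refine min_le_min ?_ ?_
  · calc L * d ≤ d ^ s * (L * r ^ (1 - s)) := mul_le_rpow_mul_rpow hs1 hL hd hd2.le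
      _ ≤ _ := by gcongr
  · calc 2 * M ≤ d ^ s * (4 * M * r ^ (-s)) :=
          two_mul_le_rpow_mul_rpow hs0 hs1 hM hd (by positivity) hrd
      _ ≤ _ := by gcongr

theorem isFracGrad_indicator_gradWeight {μ : Measure X} {s L M A t : ℝ} {S F : Set X}
    {u : X → ℝ} (hs0 : 0 ≤ s) (hs1 : s ≤ 1) (hL : 0 ≤ L) (hM : 0 ≤ M) (hA : 0 ≤ A)
    (hF : MeasurableSet F) (hLip : ∀ x ∈ S, ∀ y ∈ S, |u x - u y| ≤ L * dist x y)
    (hbound : ∀ x ∈ S, |u x| ≤ M) (hsupp : ∀ x ∈ S, x ∉ F → u x = 0)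
    (hLA : L ≤ A * 2 ^ (t * (1 - s))) (hMA : 4 * M ≤ A * 2 ^ (-(t * s))) :
    IsFracGrad μ s S u fun k => F.indicator fun _ => A * gradWeight s (t - k) := by
  have hc : ∀ k : ℤ, 0 ≤ A * gradWeight s (t - k) := fun k =>
    mul_nonneg hA (gradWeight_nonneg _ _)
  refine ⟨fun k => indicator_nonneg fun _ _ => hc k, fun k => measurable_const.indicator hF,
    ∅, empty_subset _, measure_empty, ?_⟩
  rintro k x ⟨hx, -⟩ y ⟨hy, -⟩ hd1 hd2
  by_cases hxy : x ∈ F ∨ y ∈ F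
  · have hc_le : A * gradWeight s (t - k) ≤ F.indicator (fun _ => A * gradWeight s (t - k)) x
        + F.indicator (fun _ => A * gradWeight s (t - k)) y := by
      rcases hxy with h | h <;> simp [indicator_of_mem h, indicator_nonneg, hc]
    have h2M : |u x - u y| ≤ 2 * M := by
      linarith [abs_sub (u x) (u y), hbound x hx, hbound y hy]
    calc |u x - u y| ≤ min (L * dist x y) (2 * M) := le_min (hLip x hx y hy) h2M
      _ ≤ dist x y ^ s * (A * gradWeight s (t - k)) :=
          min_mul_le_rpow_mul_gradWeight hs0 hs1 hL hM hA hLA hMA hd1 hd2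
      _ ≤ _ := by gcongr
  · obtain ⟨hxF, hyF⟩ := not_or.mp hxy
    simp [hsupp x hx hxF, hsupp y hy hyF, hxF, hyF]

section Norms

variable {Y : Type*} [MeasurableSpace Y] {μ : Measure Y} {p : ℝ}

lemma LpE_mono_ae (hp : 0 < p) {f g : Y → ℝ≥0∞} (h : f ≤ᵐ[μ] g) : LpE μ p f ≤ LpE μ p g := by
  unfold LpE
  gcongr ?_ ^ _
  exact lintegral_mono_ae (h.mono fun _ hx => ENNReal.rpow_le_rpow hx hp.le)

lemma LpE_restrict_indicator_const (hp : 0 < p) {F S : Set Y} (hF : MeasurableSet F)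
    (hFS : F ⊆ S) (c : ℝ≥0∞) :
    LpE (μ.restrict S) p (F.indicator fun _ => c) = c * μ F ^ (1 / p) := by
  have hpow : (fun x => F.indicator (fun _ => c) x ^ p) = F.indicator fun _ => c ^ p :=
    (indicator_comp_of_zero (g := fun a : ℝ≥0∞ => a ^ p) (ENNReal.zero_rpow_of_pos hp)).symm
  rw [LpE, hpow, lintegral_indicator hF, setLIntegral_const, Measure.restrict_apply hF,
    inter_eq_self_of_subset_left hFS, ENNReal.mul_rpow_of_nonneg _ _ (by positivity),
    ← ENNReal.rpow_mul, mul_one_div_cancel hp.ne', ENNReal.rpow_one]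

variable {q : ℝ≥0∞} {S F : Set Y}

lemma LpS_le_of_abs_le (hp : 0 < p) (hS : MeasurableSet S) (hF : MeasurableSet F) (hFS : F ⊆ S)
    {u : Y → ℝ} {M : ℝ} (hbound : ∀ x ∈ S, |u x| ≤ M) (hsupp : ∀ x ∈ S, x ∉ F → u x = 0) :
    LpS μ p S u ≤ ENNReal.ofReal M * μ F ^ (1 / p) := by
  rw [LpS, ← LpE_restrict_indicator_const hp hF hFS]
  refine LpE_mono_ae hp (ae_restrict_of_forall_mem hS fun x hx => ?_)
  by_cases hxF : x ∈ F
  · simpa [indicator_of_mem hxF] using ENNReal.ofReal_le_ofReal (hbound x hx)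
  · simp [indicator_of_notMem hxF, hsupp x hx hxF]

lemma tlGradNorm_indicator (hq : 0 < q) (hp : 0 < p) (hF : MeasurableSet F) (hFS : F ⊆ S)
    (c : ℤ → ℝ) :
    tlGradNorm μ p q S (fun k => F.indicator fun _ => c k)
      = lqNorm q (fun k => ENNReal.ofReal (c k)) * μ F ^ (1 / p) := by
  have hpt : (fun x => lqNorm q fun k => ENNReal.ofReal (F.indicator (fun _ => c k) x))
      = F.indicator fun _ => lqNorm q fun k => ENNReal.ofReal (c k) := by
    funext x
    by_cases hxF : x ∈ F
    · simp [indicator_of_mem hxF]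
    · simp [indicator_of_notMem hxF, lqNorm_zero hq]
  rw [tlGradNorm, hpt, LpE_restrict_indicator_const hp hF hFS]

lemma besovGradNorm_indicator (hq : 0 < q) (hp : 0 < p) (hF : MeasurableSet F) (hFS : F ⊆ S)
    {c : ℤ → ℝ} (hc : ∀ k, 0 ≤ c k) :
    besovGradNorm μ p q S (fun k => F.indicator fun _ => c k)
      = lqNorm q (fun k => ENNReal.ofReal (c k)) * μ F ^ (1 / p) := by
  have hk : ∀ k, LpS μ p S (F.indicator fun _ => c k) = μ F ^ (1 / p) * ENNReal.ofReal (c k) := by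
    intro k
    have hpt : (fun x => ENNReal.ofReal |F.indicator (fun _ => c k) x|)
        = F.indicator fun _ => ENNReal.ofReal (c k) := by
      funext x
      by_cases hxF : x ∈ F
      · simp [indicator_of_mem hxF, abs_of_nonneg (hc k)]
      · simp [indicator_of_notMem hxF]
    rw [LpS, hpt, LpE_restrict_indicator_const hp hF hFS, mul_comm]
  simp only [besovGradNorm, hk]
  rw [lqNorm_const_mul hq, mul_comm]

end Norms

section NormBounds

variable {μ : Measure X} {s p : ℝ} {q : ℝ≥0∞} {S : Set X} {u : X → ℝ} {g : ℤ → X → ℝ}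

lemma TLNorm_le_of_isFracGrad (hg : IsFracGrad μ s S u g) :
    TLNorm μ s p q S u ≤ LpS μ p S u + tlGradNorm μ p q S g :=
  add_le_add le_rfl (iInf₂_le g hg)

lemma BesovNorm_le_of_isFracGrad (hg : IsFracGrad μ s S u g) :
    BesovNorm μ s p q S u ≤ LpS μ p S u + besovGradNorm μ p q S g :=
  add_le_add le_rfl (iInf₂_le g hg)

end NormBounds

lemma BallsPosFin.measure_lt_top {μ : Measure X} (hμ : BallsPosFin μ) {F : Set X}
    (hF : Bornology.IsBounded F) : μ F < ⊤ := by
  rcases F.eq_empty_or_nonempty with rfl | ⟨z, -⟩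
  · simp
  obtain ⟨r, hr, hFr⟩ := hF.subset_ball_lt 0 z
  exact (measure_mono hFr).trans_lt (hμ z r hr).2

lemma bddAbove_abs_image_of_lipschitzOn {Z : Type*} [PseudoMetricSpace Z] {S F : Set Z}
    {u : Z → ℝ} {L : ℝ} (hL : 0 ≤ L) (hF : Bornology.IsBounded F) (hFS : F ⊆ S)
    (hLip : ∀ x ∈ S, ∀ y ∈ S, |u x - u y| ≤ L * dist x y) (hsupp : ∀ x ∈ S, x ∉ F → u x = 0) :
    BddAbove ((fun x => |u x|) '' S) := by
  have hF_image : Bornology.IsBounded ((fun x => |u x|) '' F) := by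
    obtain ⟨C, hC⟩ := Metric.isBounded_iff.mp hF
    refine Metric.isBounded_iff.mpr ⟨L * C, ?_⟩
    rintro _ ⟨x, hx, rfl⟩ _ ⟨y, hy, rfl⟩
    calc dist |u x| |u y| ≤ |u x - u y| := abs_abs_sub_abs_le_abs_sub _ _
      _ ≤ L * dist x y := hLip x (hFS hx) y (hFS hy)
      _ ≤ L * C := by gcongr; exact hC hx hy
  refine (bddAbove_insert (a := 0)).mpr hF_image.bddAbove |>.mono ?_
  rintro _ ⟨x, hx, rfl⟩
  by_cases hxF : x ∈ F
  · exact mem_insert_of_mem _ ⟨x, hxF, rfl⟩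
  · simp [hsupp x hx hxF]

lemma rpow_mul_rpow_mul_two_rpow_logb {a b : ℝ} (ha : 0 < a) (hb : 0 < b) (s : ℝ) :
    a ^ s * b ^ (1 - s) * 2 ^ (Real.logb 2 (a / b) * (1 - s)) = a ∧
      a ^ s * b ^ (1 - s) * 2 ^ (-(Real.logb 2 (a / b) * s)) = b := by
  have hlog : (2 : ℝ) ^ Real.logb 2 (a / b) = a / b :=
    Real.rpow_logb two_pos (by norm_num) (div_pos ha hb)
  rw [← mul_neg, Real.rpow_mul zero_le_two, Real.rpow_mul zero_le_two, hlog,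
    Real.div_rpow ha.le hb.le, Real.div_rpow ha.le hb.le, Real.rpow_neg ha.le,
    Real.rpow_neg hb.le]
  have ha' := Real.rpow_pos_of_pos ha
  have hb' := Real.rpow_pos_of_pos hb
  constructor
  · field_simp [(ha' s).ne', (hb' (1 - s)).ne']
    rw [← Real.rpow_add ha, add_sub_cancel, Real.rpow_one]
  · field_simp [(ha' s).ne', (hb' s).ne']
    rw [← Real.rpow_add hb, sub_add_cancel, Real.rpow_one]

theorem exists_fracGrad_indicator_lqNorm_le {q : ℝ≥0∞} (hq : 0 < q) {s : ℝ} (hs0 : 0 < s)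
    (hs1 : s < 1) {C₀ : ℝ≥0}
    (hC₀ : ∀ t : ℝ, lqNorm q (fun k => ENNReal.ofReal (gradWeight s (t - k))) ≤ C₀)
    {μ : Measure X} {S F : Set X} {u : X → ℝ} {L M : ℝ} (hL : 0 ≤ L) (hM : 0 ≤ M)
    (hF : MeasurableSet F) (hLip : ∀ x ∈ S, ∀ y ∈ S, |u x - u y| ≤ L * dist x y)
    (hbound : ∀ x ∈ S, |u x| ≤ M) (hsupp : ∀ x ∈ S, x ∉ F → u x = 0) :
    ∃ c : ℤ → ℝ, (∀ k, 0 ≤ c k) ∧ IsFracGrad μ s S u (fun k => F.indicator fun _ => c k) ∧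
      lqNorm q (fun k => ENNReal.ofReal (c k)) ≤ ENNReal.ofReal (4 * (1 + L ^ s) * (1 + M)) * C₀ := by
  -- up to constants, `2 ^ (-t)` is the distance at which the bounds `L d` and `2 M` on
  -- `|u x - u y|` cross; the shifts by `1` keep `A` and `t` meaningful when `L = 0` or `M = 0`
  set A := (1 + L) ^ s * (1 + 4 * M) ^ (1 - s)
  set t := Real.logb 2 ((1 + L) / (1 + 4 * M))
  obtain ⟨hLA, hMA⟩ := rpow_mul_rpow_mul_two_rpow_logb (a := 1 + L) (b := 1 + 4 * M)
    (by linarith) (by linarith) s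
  have hA0 : 0 ≤ A := by positivity
  have hA : A ≤ 4 * (1 + L ^ s) * (1 + M) := by
    have h1 : (1 + L) ^ s ≤ 1 + L ^ s := by
      simpa using Real.rpow_add_le_add_rpow zero_le_one hL hs0.le hs1.le
    have h2 : (1 + 4 * M) ^ (1 - s) ≤ 1 + 4 * M :=
      Real.rpow_le_self_of_one_le (by linarith) (by linarith)
    calc A ≤ (1 + L ^ s) * (1 + 4 * M) := mul_le_mul h1 h2 (by positivity) (by positivity)
      _ ≤ _ := by nlinarith [Real.rpow_nonneg hL s]
  refine ⟨fun k => A * gradWeight s (t - k), fun k => mul_nonneg hA0 (gradWeight_nonneg _ _),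
    isFracGrad_indicator_gradWeight hs0.le hs1.le hL hM hA0 hF hLip hbound hsupp
      (by rw [hLA]; linarith) (by rw [hMA]; linarith), ?_⟩
  simp only [ENNReal.ofReal_mul hA0]
  rw [lqNorm_const_mul hq]
  gcongr
  exact hC₀ t

/-- An `L`-Lipschitz function `φ` on `Ω` supported in a bounded set `F ⊆ Ω`
belongs to `M^s_{p,q}(Ω)` (and to `N^s_{p,q}(Ω)`) with
`‖φ‖ ≤ C (1+‖φ‖_∞)(1+L^s) μ(F)^{1/p}`, where `C > 0` depends only on `s` and `q`. -/
theorem lipschitz_norm_estimate (s : ℝ) (q : ℝ≥0∞) (hs0 : 0 < s) (hs1 : s < 1) (hq : 0 < q) :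
    ∃ C : ℝ, 0 < C ∧
      ∀ (X : Type*) [MetricSpace X] [MeasurableSpace X] [BorelSpace X] (μ : Measure X),
        BallsPosFin μ →
        ∀ p : ℝ, 0 < p →
        ∀ (Ω F : Set X) (φ : X → ℝ) (L : ℝ),
          MeasurableSet Ω → MeasurableSet F → F ⊆ Ω → Bornology.IsBounded F →
          Measurable φ → 0 ≤ L →
          (∀ x ∈ Ω, ∀ y ∈ Ω, |φ x - φ y| ≤ L * dist x y) →
          {x | x ∈ Ω ∧ φ x ≠ 0} ⊆ F →
          (TLNorm μ s p q Ω φ ≠ ⊤ ∧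
            TLNorm μ s p q Ω φ ≤
              ENNReal.ofReal (C * (1 + sSup ((fun x => |φ x|) '' Ω)) * (1 + L ^ s))
                * μ F ^ (1/p)) ∧
          (BesovNorm μ s p q Ω φ ≠ ⊤ ∧
            BesovNorm μ s p q Ω φ ≤
              ENNReal.ofReal (C * (1 + sSup ((fun x => |φ x|) '' Ω)) * (1 + L ^ s))
                * μ F ^ (1/p)) := by
  obtain ⟨C₀, hC₀⟩ := exists_lqNorm_gradWeight_le hq hs0 hs1
  refine ⟨1 + 4 * C₀, by positivity, ?_⟩
  intro X _ _ _ μ hμ p hp Ω F φ L hΩ hF hFΩ hFb _ hL hLip hsupp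
  set M := sSup ((fun x => |φ x|) '' Ω)
  have hφF : ∀ x ∈ Ω, x ∉ F → φ x = 0 := fun x hx hxF =>
    by_contra fun h => hxF (hsupp ⟨hx, h⟩)
  have hM : ∀ x ∈ Ω, |φ x| ≤ M := fun x hx =>
    le_csSup (bddAbove_abs_image_of_lipschitzOn hL hFb hFΩ hLip hφF) ⟨x, hx, rfl⟩
  have hM0 : 0 ≤ M := Real.sSup_nonneg (by rintro _ ⟨x, -, rfl⟩; exact abs_nonneg _)
  obtain ⟨c, hc, hgrad, hlq⟩ :=
    exists_fracGrad_indicator_lqNorm_le (μ := μ) hq hs0 hs1 hC₀ hL hM0 hF hLip hM hφF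
  have hLp := LpS_le_of_abs_le (μ := μ) hp hΩ hF hFΩ hM hφF
  set K := ENNReal.ofReal ((1 + 4 * C₀) * (1 + M) * (1 + L ^ s)) * μ F ^ (1 / p)
  have hK : ENNReal.ofReal M * μ F ^ (1 / p)
      + lqNorm q (fun k => ENNReal.ofReal (c k)) * μ F ^ (1 / p) ≤ K := by
    grw [hlq, ← add_mul, ← ENNReal.ofReal_coe_nnreal, ← ENNReal.ofReal_mul (by positivity),
      ← ENNReal.ofReal_add hM0 (by positivity)]
    exact mul_le_mul_left (ENNReal.ofReal_le_ofReal
      (by nlinarith [Real.rpow_nonneg hL s, C₀.coe_nonneg])) _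
  have hK_ne_top : K ≠ ⊤ := ENNReal.mul_ne_top ENNReal.ofReal_ne_top
    (ENNReal.rpow_ne_top_of_nonneg (by positivity) (hμ.measure_lt_top hFb).ne)
  have hTL : TLNorm μ s p q Ω φ ≤ K := by
    grw [TLNorm_le_of_isFracGrad hgrad, tlGradNorm_indicator hq hp hF hFΩ, hLp]
    exact hK
  have hBesov : BesovNorm μ s p q Ω φ ≤ K := by
    grw [BesovNorm_le_of_isFracGrad hgrad, besovGradNorm_indicator hq hp hF hFΩ hc, hLp]
    exact hK
  exact ⟨⟨ne_top_of_le_ne_top hK_ne_top hTL, hTL⟩,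
    ⟨ne_top_of_le_ne_top hK_ne_top hBesov, hBesov⟩⟩

end
end

section
/- Let S ⊂ ℝⁿ be a measurable set (with the Euclidean metric and Lebesgue measure), and let 0 < s < 1, 0 < p < ∞, 0 < q ≤ ∞. There is a constant C > 0, depending only on n, s, p, q, such that for every measurable function u : S → ℝ, ‖u‖_{B^s_{p,q}(S)} ≤ C ‖u‖_{N^s_{p,q}(S)}; in particular N^s_{p,q}(S) ⊂ B^s_{p,q}(S). -/
open MeasureTheory Metric Set
open scoped ENNReal NNReal
noncomputable section

variable {X : Type*} [MetricSpace X] [MeasurableSpace X]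

/-- The `L^p`-modulus of smoothness `ω(u,S,t)_p` on a subset `S ⊆ ℝⁿ` (in `ℝ≥0∞`). -/
def omegaMod {n : ℕ} (S : Set (EuclideanSpace ℝ (Fin n))) (u : EuclideanSpace ℝ (Fin n) → ℝ)
    (p t : ℝ) : ℝ≥0∞ :=
  ⨆ h : {h : EuclideanSpace ℝ (Fin n) // ‖h‖ ≤ t},
    (∫⁻ x in {x | x ∈ S ∧ x + (h : EuclideanSpace ℝ (Fin n)) ∈ S},
      ENNReal.ofReal |u (x + (h : EuclideanSpace ℝ (Fin n))) - u x| ^ p ∂volume) ^ (1/p)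

/-- The Besov norm `‖u‖_{B^s_{p,q}(S)}` defined via the `L^p`-modulus of smoothness. -/
def modBesovNorm {n : ℕ} (S : Set (EuclideanSpace ℝ (Fin n)))
    (u : EuclideanSpace ℝ (Fin n) → ℝ) (s p : ℝ) (q : ℝ≥0∞) : ℝ≥0∞ :=
  LpS volume p S u +
    if q = ⊤ then ⨆ t : {t : ℝ // 0 < t ∧ t < 1},
      ENNReal.ofReal ((t : ℝ) ^ (-s)) * omegaMod S u p (t : ℝ)
    else (∫⁻ t in Ioo (0:ℝ) 1,
      (ENNReal.ofReal (t ^ (-s)) * omegaMod S u p t) ^ q.toReal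
        * ENNReal.ofReal t⁻¹) ^ (1 / q.toReal)

/-!
If `2^{-j-1} ≤ |h| < 2^{-j}`, the gradient inequality gives `|u(x+h) - u(x)| ≤ |h|^s (g_j(x+h) + g_j(x))`
for a.e. `x ∈ S_h`, and translation invariance of Lebesgue measure turns this into
`‖u(· + h) - u‖_{L^p(S_h)} ≲ |h|^s ‖g_j‖_{L^p(S)}`. Hence `t^{-s} ω(u,S,t)_p ≲ sup_j ‖g_j‖_p`, which is the
case `q = ∞`, and `t^{-s} ω(u,S,t)_p ≲ sup_{m ≥ 0} 2^{-ms} ‖g_{k+m}‖_p` for `t ∈ [2^{-k-1}, 2^{-k})`.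
Splitting `(0,1)` into these dyadic intervals turns the `dt/t`-integral into a sum over `k`, which the
discrete Hardy inequality `∑_k ∑_m r^m w_{k+m} ≤ (1 - r)⁻¹ ∑_j w_j`, with `r = 2^{-sq} < 1`, bounds by a
multiple of `∑_j ‖g_j‖_p^q`.
-/

lemma exists_two_rpow_neg_sub_one_le_lt {t : ℝ} (ht : 0 < t) :
    ∃ j : ℤ, (2 : ℝ) ^ (-(j : ℝ) - 1) ≤ t ∧ t < (2 : ℝ) ^ (-(j : ℝ)) := by
  obtain ⟨n, hn, hn'⟩ := exists_mem_Ico_zpow ht one_lt_two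
  rw [← Real.rpow_intCast] at hn hn'
  have e : -((-n - 1 : ℤ) : ℝ) - 1 = n := by push_cast; ring
  have e' : -((-n - 1 : ℤ) : ℝ) = ((n + 1 : ℤ) : ℝ) := by push_cast; ring
  exact ⟨-n - 1, by rw [e]; exact hn, by rw [e']; exact hn'⟩

lemma le_of_two_rpow_neg_sub_one_lt {j k : ℤ}
    (h : (2 : ℝ) ^ (-(j : ℝ) - 1) < (2 : ℝ) ^ (-(k : ℝ))) : k ≤ j := by
  have h' := (Real.rpow_lt_rpow_left_iff one_lt_two).1 h
  have : (k : ℝ) < j + 1 := by linarith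
  exact Int.lt_add_one_iff.1 (by exact_mod_cast this)

lemma tsum_tsum_pow_mul_le (r : ℝ≥0∞) (w : ℤ → ℝ≥0∞) :
    ∑' (k : ℕ) (m : ℕ), r ^ m * w (k + m : ℕ) ≤ (1 - r)⁻¹ * ∑' j, w j := by
  rw [ENNReal.tsum_comm, ← ENNReal.tsum_geometric, ← ENNReal.tsum_mul_right]
  refine ENNReal.tsum_le_tsum fun m => ?_
  rw [ENNReal.tsum_mul_left]
  gcongr
  exact ENNReal.tsum_comp_le_tsum_of_injective (fun a b h => by simpa using h) w

lemma two_rpow_add_one_mul_volume_Ico (k : ℕ) :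
    ENNReal.ofReal ((2 : ℝ) ^ ((k : ℝ) + 1)) *
      volume (Ico ((2 : ℝ) ^ (-(k : ℝ) - 1)) ((2 : ℝ) ^ (-(k : ℝ)))) = 1 := by
  rw [Real.volume_Ico, ← ENNReal.ofReal_mul (by positivity), ← ENNReal.ofReal_one]
  congr 1
  have h2 : (2 : ℝ) ^ (-(k : ℝ)) = 2 ^ (-(k : ℝ) - 1) * 2 := by
    rw [← Real.rpow_add_one two_ne_zero]; ring_nf
  rw [h2, show ∀ x : ℝ, x * 2 - x = x by intro x; ring, ← Real.rpow_add two_pos]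
  simp

lemma setLIntegral_Ioo_zero_one_mul_inv_le_tsum {f : ℝ → ℝ≥0∞} {c : ℕ → ℝ≥0∞}
    (hf : ∀ k : ℕ, ∀ t ∈ Ico ((2 : ℝ) ^ (-(k : ℝ) - 1)) ((2 : ℝ) ^ (-(k : ℝ))), f t ≤ c k) :
    ∫⁻ t in Ioo 0 1, f t * ENNReal.ofReal t⁻¹ ≤ ∑' k, c k := by
  set I : ℕ → Set ℝ := fun k => Ico ((2 : ℝ) ^ (-(k : ℝ) - 1)) ((2 : ℝ) ^ (-(k : ℝ)))
  have hpt : ∀ t ∈ Ioo (0 : ℝ) 1, f t * ENNReal.ofReal t⁻¹ ≤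
      ∑' k, (I k).indicator (fun _ => c k * ENNReal.ofReal ((2 : ℝ) ^ ((k : ℝ) + 1))) t := by
    rintro t ⟨ht0, ht1⟩
    obtain ⟨j, hj, hj'⟩ := exists_two_rpow_neg_sub_one_le_lt ht0
    have hj0 : (0 : ℤ) ≤ j :=
      le_of_two_rpow_neg_sub_one_lt (hj.trans_lt (by simpa using ht1))
    lift j to ℕ using hj0
    have htI : t ∈ I j := ⟨by exact_mod_cast hj, by exact_mod_cast hj'⟩
    refine le_trans ?_ (ENNReal.le_tsum j)
    rw [indicator_of_mem htI]
    gcongr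
    · exact hf j t htI
    · rw [← inv_inv ((2 : ℝ) ^ ((j : ℝ) + 1)), ← Real.rpow_neg two_pos.le]
      exact inv_anti₀ (by positivity) (by convert htI.1 using 2; ring)
  calc ∫⁻ t in Ioo 0 1, f t * ENNReal.ofReal t⁻¹
      ≤ ∫⁻ t, ∑' k, (I k).indicator (fun _ => c k * ENNReal.ofReal ((2 : ℝ) ^ ((k : ℝ) + 1))) t :=
        (setLIntegral_mono' measurableSet_Ioo hpt).trans (setLIntegral_le_lintegral _ _)
    _ = ∑' k, c k := by
        rw [lintegral_tsum fun k => (measurable_const.indicator measurableSet_Ico).aemeasurable]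
        refine tsum_congr fun k => ?_
        rw [lintegral_indicator_const measurableSet_Ico, mul_assoc,
          two_rpow_add_one_mul_volume_Ico, mul_one]

lemma ofReal_rpow_neg_mul_min_rpow_le {s t : ℝ} (hs : 0 ≤ s) {j : ℤ} {k m : ℕ}
    (hjkm : j = (k + m : ℕ)) (ht : (2 : ℝ) ^ (-(k : ℝ) - 1) ≤ t) :
    ENNReal.ofReal (t ^ (-s) * min t ((2 : ℝ) ^ (-(j : ℝ))) ^ s) ≤ 2 ^ s * (2 ^ (-s)) ^ m := by
  have ht0 : 0 < t := lt_of_lt_of_le (by positivity) ht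
  have hreal : t ^ (-s) * min t ((2 : ℝ) ^ (-(j : ℝ))) ^ s ≤ 2 ^ s * (2 ^ (-s)) ^ m :=
    calc t ^ (-s) * min t ((2 : ℝ) ^ (-(j : ℝ))) ^ s
        ≤ ((2 : ℝ) ^ (-(k : ℝ) - 1)) ^ (-s) * ((2 : ℝ) ^ (-(j : ℝ))) ^ s := by
          refine mul_le_mul (Real.rpow_le_rpow_of_nonpos (by positivity) ht (neg_nonpos.2 hs)) ?_
            (by positivity) (by positivity)
          exact Real.rpow_le_rpow (le_min ht0.le (by positivity)) (min_le_right _ _) hs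
      _ = 2 ^ s * (2 ^ (-s)) ^ m := by
          rw [← Real.rpow_natCast, ← Real.rpow_mul two_pos.le, ← Real.rpow_mul two_pos.le,
            ← Real.rpow_mul two_pos.le, ← Real.rpow_add two_pos, ← Real.rpow_add two_pos, hjkm]
          push_cast
          ring_nf
  calc ENNReal.ofReal (t ^ (-s) * min t ((2 : ℝ) ^ (-(j : ℝ))) ^ s)
      ≤ ENNReal.ofReal (2 ^ s * (2 ^ (-s)) ^ m) := ENNReal.ofReal_le_ofReal hreal
    _ = 2 ^ s * (2 ^ (-s)) ^ m := by
        rw [ENNReal.ofReal_mul (by positivity), ENNReal.ofReal_pow (by positivity),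
          ← ENNReal.ofReal_rpow_of_pos two_pos, ← ENNReal.ofReal_rpow_of_pos two_pos,
          ENNReal.ofReal_ofNat]

lemma ENNReal.iSup_rpow_le_tsum_rpow {ι : Type*} (x : ι → ℝ≥0∞) {r : ℝ} (hr : 0 < r) :
    (⨆ i, x i) ^ r ≤ ∑' i, x i ^ r :=
  (ENNReal.le_rpow_inv_iff hr).1 <|
    iSup_le fun i => (ENNReal.le_rpow_inv_iff hr).2 (ENNReal.le_tsum i)

lemma ENNReal.pow_rpow_comm (x : ℝ≥0∞) (m : ℕ) (r : ℝ) : (x ^ m) ^ r = (x ^ r) ^ m := by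
  rw [← ENNReal.rpow_natCast, ← ENNReal.rpow_natCast, ← ENNReal.rpow_mul, ← ENNReal.rpow_mul,
    mul_comm]

lemma ofReal_rpow_le_of_le_mul_add {a c x y p : ℝ} (hp : 0 ≤ p) (hc : 0 ≤ c) (hx : 0 ≤ x)
    (hy : 0 ≤ y) (h : a ≤ c * (x + y)) :
    ENNReal.ofReal a ^ p ≤
      2 ^ p * ENNReal.ofReal c ^ p * (ENNReal.ofReal x ^ p + ENNReal.ofReal y ^ p) :=
  calc ENNReal.ofReal a ^ p ≤ (ENNReal.ofReal c * (ENNReal.ofReal x + ENNReal.ofReal y)) ^ p := by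
        rw [← ENNReal.ofReal_add hx hy, ← ENNReal.ofReal_mul hc]
        gcongr
    _ ≤ 2 ^ p * ENNReal.ofReal c ^ p * (ENNReal.ofReal x ^ p + ENNReal.ofReal y ^ p) := by
        rw [ENNReal.mul_rpow_of_nonneg _ _ hp, mul_comm (2 ^ p), mul_assoc]
        gcongr
        exact ENNReal.add_rpow_le_two_rpow_mul_rpow_add_rpow _ _ hp

section Translation

variable {E : Type*} [NormedAddCommGroup E] [MeasurableSpace E] [MeasurableAdd E]
  {μ : Measure E} [μ.IsAddRightInvariant] {S : Set E} {s p : ℝ} {u : E → ℝ} {g : ℤ → E → ℝ}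

/-- `‖u(· + h) - u‖_{L^p(S_h)}` with `S_h = S ∩ (S - h)`. -/
def translationDiffNorm (μ : Measure E) (S : Set E) (u : E → ℝ) (p : ℝ) (h : E) : ℝ≥0∞ :=
  (∫⁻ x in {x | x ∈ S ∧ x + h ∈ S}, ENNReal.ofReal |u (x + h) - u x| ^ p ∂μ) ^ (1 / p)

lemma IsFracGrad.ae_abs_sub_le (hg : IsFracGrad μ s S u g) {h : E} {j : ℤ}
    (hj : (2 : ℝ) ^ (-(j : ℝ) - 1) ≤ ‖h‖) (hj' : ‖h‖ < (2 : ℝ) ^ (-(j : ℝ))) :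
    ∀ᵐ x ∂μ, x ∈ S → x + h ∈ S → |u (x + h) - u x| ≤ ‖h‖ ^ s * (g j (x + h) + g j x) := by
  obtain ⟨-, -, N, -, hN, hgrad⟩ := hg
  have hN' : μ ((· + h) ⁻¹' N) = 0 := (measurePreserving_add_right μ h).preimage_null hN
  filter_upwards [measure_eq_zero_iff_ae_notMem.1 hN,
    measure_eq_zero_iff_ae_notMem.1 hN'] with x hx hxh hxS hxhS
  have hd : dist (x + h) x = ‖h‖ := by rw [dist_eq_norm, add_sub_cancel_left]
  simpa [hd] using hgrad j (x + h) ⟨hxhS, hxh⟩ x ⟨hxS, hx⟩ (hd ▸ hj) (hd ▸ hj')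

lemma setLIntegral_comp_add_right_le (h : E) (f : E → ℝ≥0∞) :
    ∫⁻ x in {x | x ∈ S ∧ x + h ∈ S}, f (x + h) ∂μ ≤ ∫⁻ x in S, f x ∂μ :=
  (lintegral_mono_set fun _ hx => hx.2).trans_eq
    ((measurePreserving_add_right μ h).setLIntegral_comp_preimage_emb
      (measurableEmbedding_addRight h) f S)

lemma translationDiffNorm_le (hp : 0 < p) (hS : MeasurableSet S) (hg : IsFracGrad μ s S u g)
    {h : E} {j : ℤ} (hj : (2 : ℝ) ^ (-(j : ℝ) - 1) ≤ ‖h‖) (hj' : ‖h‖ < (2 : ℝ) ^ (-(j : ℝ))) :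
    translationDiffNorm μ S u p h ≤
      2 * 2 ^ (1 / p) * ENNReal.ofReal (‖h‖ ^ s) * LpS μ p S (g j) := by
  set G : E → ℝ≥0∞ := fun x => ENNReal.ofReal (g j x) ^ p
  set c := ENNReal.ofReal (‖h‖ ^ s)
  have hG : Measurable G := ((hg.2.1 j).ennreal_ofReal).pow_const p
  have hLp : LpS μ p S (g j) = (∫⁻ x in S, G x ∂μ) ^ (1 / p) := by
    simp only [LpS, LpE, G, abs_of_nonneg (hg.1 j _)]
  have hT : MeasurableSet {x | x ∈ S ∧ x + h ∈ S} := hS.inter (measurable_add_const h hS)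
  have hint : ∫⁻ x in {x | x ∈ S ∧ x + h ∈ S}, ENNReal.ofReal |u (x + h) - u x| ^ p ∂μ ≤
      2 ^ p * c ^ p * (2 * ∫⁻ x in S, G x ∂μ) := by
    calc _ ≤ ∫⁻ x in {x | x ∈ S ∧ x + h ∈ S}, 2 ^ p * c ^ p * (G (x + h) + G x) ∂μ :=
          setLIntegral_mono_ae' hT <| (hg.ae_abs_sub_le hj hj').mono fun x hx hxT =>
            ofReal_rpow_le_of_le_mul_add hp.le (by positivity) (hg.1 j _) (hg.1 j _)
              (hx hxT.1 hxT.2)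
      _ = 2 ^ p * c ^ p * (∫⁻ x in {x | x ∈ S ∧ x + h ∈ S}, G (x + h) ∂μ +
            ∫⁻ x in {x | x ∈ S ∧ x + h ∈ S}, G x ∂μ) := by
          rw [lintegral_const_mul' _ _ (ENNReal.mul_ne_top (by simp)
            (ENNReal.rpow_ne_top_of_nonneg hp.le ENNReal.ofReal_ne_top)), lintegral_add_right _ hG]
      _ ≤ 2 ^ p * c ^ p * (2 * ∫⁻ x in S, G x ∂μ) := by
          rw [two_mul]
          exact mul_le_mul_right (add_le_add (setLIntegral_comp_add_right_le h G)
            (lintegral_mono_set fun _ hx => hx.1)) _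
  calc translationDiffNorm μ S u p h ≤ (2 ^ p * c ^ p * (2 * ∫⁻ x in S, G x ∂μ)) ^ (1 / p) := by
        unfold translationDiffNorm; gcongr
    _ = 2 * 2 ^ (1 / p) * c * LpS μ p S (g j) := by
        rw [hLp]
        simp only [ENNReal.mul_rpow_of_nonneg _ _ (one_div_nonneg.2 hp.le), ← ENNReal.rpow_mul,
          mul_one_div_cancel hp.ne', ENNReal.rpow_one]
        ring

end Translation

section Euclidean

variable {n : ℕ} {S : Set (EuclideanSpace ℝ (Fin n))} {s p : ℝ}
  {u : EuclideanSpace ℝ (Fin n) → ℝ} {g : ℤ → EuclideanSpace ℝ (Fin n) → ℝ}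

lemma omegaMod_le (hs : 0 < s) (hp : 0 < p) (hS : MeasurableSet S)
    (hg : IsFracGrad volume s S u g) (t : ℝ) :
    omegaMod S u p t ≤ 2 * 2 ^ (1 / p) * ⨆ (j : ℤ) (_ : (2 : ℝ) ^ (-(j : ℝ) - 1) ≤ t),
      ENNReal.ofReal (min t ((2 : ℝ) ^ (-(j : ℝ))) ^ s) * LpS volume p S (g j) := by
  refine iSup_le fun ⟨h, ht⟩ => ?_
  change translationDiffNorm volume S u p h ≤ _
  rcases eq_or_ne h 0 with rfl | h0
  · simp [translationDiffNorm, ENNReal.zero_rpow_of_pos hp, ENNReal.zero_rpow_of_pos (inv_pos.2 hp)]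
  obtain ⟨j, hj, hj'⟩ := exists_two_rpow_neg_sub_one_le_lt (norm_pos_iff.2 h0)
  calc translationDiffNorm volume S u p h
      ≤ 2 * 2 ^ (1 / p) * ENNReal.ofReal (‖h‖ ^ s) * LpS volume p S (g j) :=
        translationDiffNorm_le hp hS hg hj hj'
    _ ≤ _ := by
        rw [mul_assoc]
        gcongr
        refine le_trans ?_ (le_iSup₂ (f := fun (j : ℤ) (_ : (2 : ℝ) ^ (-(j : ℝ) - 1) ≤ t) =>
          ENNReal.ofReal (min t ((2 : ℝ) ^ (-(j : ℝ))) ^ s) * LpS volume p S (g j)) j (hj.trans ht))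
        gcongr
        exact le_min ht hj'.le

lemma rpow_neg_mul_omegaMod_le_iSup (hs : 0 < s) (hp : 0 < p) (hS : MeasurableSet S)
    (hg : IsFracGrad volume s S u g) {t : ℝ} (ht : 0 < t) :
    ENNReal.ofReal (t ^ (-s)) * omegaMod S u p t ≤ 2 * 2 ^ (1 / p) * ⨆ j, LpS volume p S (g j) := by
  calc ENNReal.ofReal (t ^ (-s)) * omegaMod S u p t
      ≤ ENNReal.ofReal (t ^ (-s)) * (2 * 2 ^ (1 / p) * ⨆ (j : ℤ) (_ : (2 : ℝ) ^ (-(j : ℝ) - 1) ≤ t),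
          ENNReal.ofReal (min t ((2 : ℝ) ^ (-(j : ℝ))) ^ s) * LpS volume p S (g j)) := by
        gcongr; exact omegaMod_le hs hp hS hg t
    _ ≤ 2 * 2 ^ (1 / p) * ⨆ j, LpS volume p S (g j) := by
        rw [mul_left_comm]
        gcongr
        simp only [ENNReal.mul_iSup]
        refine iSup₂_le fun j _ => le_trans ?_ (le_iSup _ j)
        rw [← mul_assoc, ← ENNReal.ofReal_mul (by positivity)]
        refine mul_le_of_le_one_left zero_le (ENNReal.ofReal_le_one.2 ?_)
        calc t ^ (-s) * min t ((2 : ℝ) ^ (-(j : ℝ))) ^ s ≤ t ^ (-s) * t ^ s := by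
              gcongr; exact min_le_left _ _
          _ = 1 := by rw [← Real.rpow_add ht, neg_add_cancel, Real.rpow_zero]

lemma rpow_neg_mul_omegaMod_le_of_mem_Ico (hs : 0 < s) (hp : 0 < p) (hS : MeasurableSet S)
    (hg : IsFracGrad volume s S u g) {k : ℕ} {t : ℝ}
    (ht : t ∈ Ico ((2 : ℝ) ^ (-(k : ℝ) - 1)) ((2 : ℝ) ^ (-(k : ℝ)))) :
    ENNReal.ofReal (t ^ (-s)) * omegaMod S u p t ≤
      2 * 2 ^ (1 / p) * 2 ^ s * ⨆ m : ℕ, (2 ^ (-s)) ^ m * LpS volume p S (g (k + m : ℕ)) := by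
  calc ENNReal.ofReal (t ^ (-s)) * omegaMod S u p t
      ≤ ENNReal.ofReal (t ^ (-s)) * (2 * 2 ^ (1 / p) * ⨆ (j : ℤ) (_ : (2 : ℝ) ^ (-(j : ℝ) - 1) ≤ t),
          ENNReal.ofReal (min t ((2 : ℝ) ^ (-(j : ℝ))) ^ s) * LpS volume p S (g j)) := by
        gcongr; exact omegaMod_le hs hp hS hg t
    _ ≤ 2 * 2 ^ (1 / p) * 2 ^ s * ⨆ m : ℕ, (2 ^ (-s)) ^ m * LpS volume p S (g (k + m : ℕ)) := by
        rw [mul_left_comm, mul_assoc _ (2 ^ s)]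
        refine mul_le_mul_right ?_ _
        simp only [ENNReal.mul_iSup]
        refine iSup₂_le fun j hj => ?_
        have hkj : (k : ℤ) ≤ j := le_of_two_rpow_neg_sub_one_lt (by exact_mod_cast hj.trans_lt ht.2)
        obtain ⟨m, rfl⟩ : ∃ m : ℕ, j = (k + m : ℕ) := ⟨(j - k).toNat, by omega⟩
        refine le_trans ?_ (le_iSup _ m)
        have ht0 : 0 < t := lt_of_lt_of_le (by positivity) ht.1
        rw [← mul_assoc, ← mul_assoc, ← ENNReal.ofReal_mul (Real.rpow_nonneg ht0.le _)]
        gcongr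
        exact ofReal_rpow_neg_mul_min_rpow_le hs.le rfl ht.1

def modBesovSeminorm (S : Set (EuclideanSpace ℝ (Fin n))) (u : EuclideanSpace ℝ (Fin n) → ℝ)
    (s p : ℝ) (q : ℝ≥0∞) : ℝ≥0∞ :=
  if q = ⊤ then ⨆ t : {t : ℝ // 0 < t ∧ t < 1},
    ENNReal.ofReal ((t : ℝ) ^ (-s)) * omegaMod S u p (t : ℝ)
  else (∫⁻ t in Ioo (0:ℝ) 1,
    (ENNReal.ofReal (t ^ (-s)) * omegaMod S u p t) ^ q.toReal
      * ENNReal.ofReal t⁻¹) ^ (1 / q.toReal)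

lemma modBesovNorm_eq_add (S : Set (EuclideanSpace ℝ (Fin n))) (u : EuclideanSpace ℝ (Fin n) → ℝ)
    (s p : ℝ) (q : ℝ≥0∞) :
    modBesovNorm S u s p q = LpS volume p S u + modBesovSeminorm S u s p q := rfl

lemma modBesovSeminorm_top_le (hs : 0 < s) (hp : 0 < p) (hS : MeasurableSet S)
    (hg : IsFracGrad volume s S u g) :
    modBesovSeminorm S u s p ⊤ ≤ 2 * 2 ^ (1 / p) * besovGradNorm volume p ⊤ S g := by
  rw [modBesovSeminorm, if_pos rfl, besovGradNorm, lqNorm, if_pos rfl]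
  exact iSup_le fun t => rpow_neg_mul_omegaMod_le_iSup hs hp hS hg t.2.1

lemma modBesovSeminorm_le_of_ne_top (hs : 0 < s) (hp : 0 < p) (hS : MeasurableSet S)
    {q : ℝ≥0∞} (hq : q ≠ 0) (hq' : q ≠ ⊤) (hg : IsFracGrad volume s S u g) :
    modBesovSeminorm S u s p q ≤ 2 * 2 ^ (1 / p) * 2 ^ s *
      (1 - (2 ^ (-s)) ^ q.toReal)⁻¹ ^ (1 / q.toReal) * besovGradNorm volume p q S g := by
  set r := q.toReal
  have hr : 0 < r := ENNReal.toReal_pos hq hq'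
  set b : ℤ → ℝ≥0∞ := fun j => LpS volume p S (g j)
  set M : ℝ≥0∞ := 2 * 2 ^ (1 / p) * 2 ^ s
  have hdyadic : ∀ k : ℕ, ∀ t ∈ Ico ((2 : ℝ) ^ (-(k : ℝ) - 1)) ((2 : ℝ) ^ (-(k : ℝ))),
      (ENNReal.ofReal (t ^ (-s)) * omegaMod S u p t) ^ r ≤
        M ^ r * ∑' m : ℕ, ((2 ^ (-s)) ^ r) ^ m * b (k + m : ℕ) ^ r := by
    intro k t ht
    calc (ENNReal.ofReal (t ^ (-s)) * omegaMod S u p t) ^ r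
        ≤ (M * ⨆ m : ℕ, (2 ^ (-s)) ^ m * b (k + m : ℕ)) ^ r :=
          ENNReal.rpow_le_rpow (rpow_neg_mul_omegaMod_le_of_mem_Ico hs hp hS hg ht) hr.le
      _ ≤ M ^ r * ∑' m : ℕ, ((2 ^ (-s)) ^ m * b (k + m : ℕ)) ^ r := by
          rw [ENNReal.mul_rpow_of_nonneg _ _ hr.le]
          gcongr
          exact ENNReal.iSup_rpow_le_tsum_rpow _ hr
      _ = M ^ r * ∑' m : ℕ, ((2 ^ (-s)) ^ r) ^ m * b (k + m : ℕ) ^ r := by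
          simp only [ENNReal.mul_rpow_of_nonneg _ _ hr.le, ENNReal.pow_rpow_comm]
  rw [modBesovSeminorm, if_neg hq', besovGradNorm, lqNorm, if_neg hq']
  calc (∫⁻ t in Ioo (0 : ℝ) 1, (ENNReal.ofReal (t ^ (-s)) * omegaMod S u p t) ^ r *
        ENNReal.ofReal t⁻¹) ^ (1 / r)
      ≤ (M ^ r * ((1 - (2 ^ (-s)) ^ r)⁻¹ * ∑' j, b j ^ r)) ^ (1 / r) := by
        gcongr
        refine (setLIntegral_Ioo_zero_one_mul_inv_le_tsum hdyadic).trans ?_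
        rw [ENNReal.tsum_mul_left]
        gcongr
        exact tsum_tsum_pow_mul_le _ fun j => b j ^ r
    _ = M * (1 - (2 ^ (-s)) ^ r)⁻¹ ^ (1 / r) * (∑' j, b j ^ r) ^ (1 / r) := by
        rw [ENNReal.mul_rpow_of_nonneg (M ^ r) _ (by positivity),
          ENNReal.mul_rpow_of_nonneg _ (∑' j, b j ^ r) (by positivity), ← ENNReal.rpow_mul,
          mul_one_div_cancel hr.ne', ENNReal.rpow_one]
        exact (mul_assoc _ _ _).symm

lemma exists_modBesovSeminorm_le (hs : 0 < s) (hp : 0 < p) {q : ℝ≥0∞} (hq : 0 < q) :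
    ∃ C : ℝ≥0∞, C ≠ ⊤ ∧ ∀ S : Set (EuclideanSpace ℝ (Fin n)), MeasurableSet S →
      ∀ u g, IsFracGrad volume s S u g →
        modBesovSeminorm S u s p q ≤ C * besovGradNorm volume p q S g := by
  have hM : 2 * (2 : ℝ≥0∞) ^ (1 / p) ≠ ⊤ :=
    ENNReal.mul_ne_top (by simp) (ENNReal.rpow_ne_top_of_nonneg (by positivity) (by simp))
  rcases eq_or_ne q ⊤ with rfl | hq'
  · exact ⟨_, hM, fun S hS u g hg => modBesovSeminorm_top_le hs hp hS hg⟩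
  refine ⟨_, ?_, fun S hS u g hg => modBesovSeminorm_le_of_ne_top hs hp hS hq.ne' hq' hg⟩
  have hr : 0 < q.toReal := ENNReal.toReal_pos hq.ne' hq'
  have hρ : ((2 : ℝ≥0∞) ^ (-s)) ^ q.toReal < 1 := by
    rw [← ENNReal.rpow_mul]
    exact ENNReal.rpow_lt_one_of_one_lt_of_neg (by norm_num) (by nlinarith)
  refine ENNReal.mul_ne_top (ENNReal.mul_ne_top hM ?_) ?_
  · exact ENNReal.rpow_ne_top_of_nonneg hs.le (by simp)
  · exact ENNReal.rpow_ne_top_of_nonneg (by positivity)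
      (ENNReal.inv_ne_top.2 (tsub_pos_of_lt hρ).ne')

end Euclidean

theorem hajlaszBesov_subset_besov_general (n : ℕ) (s p : ℝ) (q : ℝ≥0∞)
    (hs0 : 0 < s) (hp : 0 < p) (hq : 0 < q) :
    ∃ C : ℝ, 0 < C ∧
      ∀ S : Set (EuclideanSpace ℝ (Fin n)), MeasurableSet S →
      ∀ u : EuclideanSpace ℝ (Fin n) → ℝ, Measurable u →
        modBesovNorm S u s p q ≤ ENNReal.ofReal C * BesovNorm volume s p q S u := by
  obtain ⟨C, hC, hsemi⟩ := exists_modBesovSeminorm_le (n := n) hs0 hp hq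
  have hC' : 1 + C ≠ ⊤ := ENNReal.add_ne_top.2 ⟨ENNReal.one_ne_top, hC⟩
  refine ⟨(1 + C).toReal, ENNReal.toReal_pos (by simp) hC', fun S hS u _ => ?_⟩
  rw [ENNReal.ofReal_toReal hC', modBesovNorm_eq_add, BesovNorm, mul_add]
  gcongr
  · exact le_mul_of_one_le_left zero_le le_self_add
  · simp only [ENNReal.mul_iInf_of_ne (by simp : 1 + C ≠ 0) hC']
    exact le_iInf₂ fun g hg => (hsemi S hS u g hg).trans (mul_le_mul_left le_add_self _)

/-- On any measurable `S ⊆ ℝⁿ`, `‖u‖_{B^s_{p,q}(S)} ≤ C ‖u‖_{N^s_{p,q}(S)}`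
with `C = C(n,s,p,q)`; in particular `N^s_{p,q}(S) ⊆ B^s_{p,q}(S)`. -/
theorem hajlaszBesov_subset_besov (n : ℕ) (s p : ℝ) (q : ℝ≥0∞)
    (hs0 : 0 < s) (hs1 : s < 1) (hp : 0 < p) (hq : 0 < q) :
    ∃ C : ℝ, 0 < C ∧
      ∀ S : Set (EuclideanSpace ℝ (Fin n)), MeasurableSet S →
      ∀ u : EuclideanSpace ℝ (Fin n) → ℝ, Measurable u →
        modBesovNorm S u s p q ≤ ENNReal.ofReal C * BesovNorm volume s p q S u :=
  hajlaszBesov_subset_besov_general n s p q hs0 hp hq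

end
end
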